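/- arXiv:1706.09341 — 6 statements merged into one kernel-verified Lean document; each statement's English description precedes it below -/
import Mathlib

section
/- Let a be an integer greater than 1 and n a positive integer. Then Φ_n(a) has a prime factor p such that p does not divide a^m − 1 for any positive integer m < n, unless (a, n) = (2, 1), (a, n) = (2, 6), or n = 2 and a + 1 is a power of 2. -/
/-!
If a prime `q` divides `Φ_n(a)`, then `a` has multiplicative order `ordCompl[q] n` modulo `q`,
and this order divides `q - 1`. So a prime factor of `Φ_n(a)` that does not divide `n` is
primitive. Otherwise every prime factor of `Φ_n(a)` divides `n`. Two distinct ones would each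
divide the other minus one, so only one prime `q` occurs. Since `Φ_n(a)` divides
`1 + c + ⋯ + c^(q-1)` with `c = a^(n/q) ≡ 1 (mod q)`, we get `q² ∤ Φ_n(a)` when `n > 2`, and hence
`Φ_n(a) = q`. Writing `n = m q^k`, we have `Φ_n(a) = Φ_{mq}(a^(q^(k-1)))`, and the bound
`Φ_N(b) > (b-1)^φ(N)` makes this bigger than `q` unless `a = 2` and `k = 1`. In that last case
`Φ_m(2^q) = q Φ_m(2)`, which forces `m = 2`, `q = 3`.
-/

open Polynomial Finset

theorem cast_cyclotomic_eval {R : Type*} [Ring R] (n : ℕ) (a : ℤ) :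
    (((cyclotomic n ℤ).eval a : ℤ) : R) = (cyclotomic n R).eval (a : R) := by
  rw [← map_cyclotomic_int n R, eval_intCast_map, Int.cast_id, eq_intCast]

theorem one_lt_natAbs_cyclotomic_eval {n : ℕ} {a : ℤ} (hn : 1 < n) (ha : 1 < a) :
    1 < ((cyclotomic n ℤ).eval a).natAbs := by
  lift a to ℕ using by omega
  have := sub_one_lt_natAbs_cyclotomic_eval hn (q := a) (by omega)
  omega

theorem cyclotomic_expand_pow_eq_cyclotomic {R : Type*} [CommRing R] {p n : ℕ} (hp : p.Prime)
    (hpn : p ∣ n) (j : ℕ) : expand R (p ^ j) (cyclotomic n R) = cyclotomic (n * p ^ j) R := by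
  induction j with
  | zero => simp
  | succ j ih =>
    rw [pow_succ', expand_mul, ih, cyclotomic_expand_eq_cyclotomic hp (hpn.mul_right _),
      mul_assoc, mul_comm (p ^ j)]

section ModPrime

variable {a : ℤ} {n q : ℕ}

theorem isPrimitiveRoot_of_dvd_cyclotomic_eval (hn : n ≠ 0) (hq : q.Prime)
    (h : (q : ℤ) ∣ (cyclotomic n ℤ).eval a) : IsPrimitiveRoot (a : ZMod q) (ordCompl[q] n) := by
  have := Fact.mk hq
  have : NeZero ((ordCompl[q] n : ℕ) : ZMod q) :=
    ⟨by rw [Ne, ZMod.natCast_eq_zero_iff]; exact Nat.not_dvd_ordCompl hq hn⟩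
  rw [← isRoot_cyclotomic_prime_pow_mul_iff_of_charP (k := n.factorization q),
    Nat.ordProj_mul_ordCompl_eq_self, IsRoot.def, ← cast_cyclotomic_eval,
    ZMod.intCast_zmod_eq_zero_iff_dvd]
  exact h

theorem ordCompl_dvd_sub_one_of_dvd_cyclotomic_eval (hn : n ≠ 0) (hq : q.Prime)
    (h : (q : ℤ) ∣ (cyclotomic n ℤ).eval a) : ordCompl[q] n ∣ q - 1 := by
  have := Fact.mk hq
  have hprim := isPrimitiveRoot_of_dvd_cyclotomic_eval hn hq h
  rw [hprim.eq_orderOf]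
  exact ZMod.orderOf_dvd_card_sub_one (hprim.ne_zero (Nat.ordCompl_pos q hn).ne')

theorem dvd_pow_div_sub_one_of_dvd_cyclotomic_eval (hn : n ≠ 0) (hq : q.Prime) (hqn : q ∣ n)
    (h : (q : ℤ) ∣ (cyclotomic n ℤ).eval a) : (q : ℤ) ∣ a ^ (n / q) - 1 := by
  rw [← ZMod.intCast_zmod_eq_zero_iff_dvd, Int.cast_sub, Int.cast_pow, Int.cast_one, sub_eq_zero,
    (isPrimitiveRoot_of_dvd_cyclotomic_eval hn hq h).pow_eq_one_iff_dvd]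
  refine (Nat.coprime_ordCompl hq hn).symm.dvd_of_dvd_mul_right ?_
  rw [Nat.div_mul_cancel hqn]
  exact Nat.ordCompl_dvd n q

theorem not_dvd_pow_sub_one_of_dvd_cyclotomic_eval (hq : q.Prime) (hqn : ¬q ∣ n)
    (h : (q : ℤ) ∣ (cyclotomic n ℤ).eval a) {m : ℕ} (hm : 0 < m) (hmn : m < n) :
    ¬(q : ℤ) ∣ a ^ m - 1 := by
  have hprim := isPrimitiveRoot_of_dvd_cyclotomic_eval (by rintro rfl; simp at hqn) hq h
  rw [Nat.factorization_eq_zero_of_not_dvd hqn, pow_zero, Nat.div_one] at hprim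
  rw [← ZMod.intCast_zmod_eq_zero_iff_dvd, Int.cast_sub, Int.cast_pow, Int.cast_one, sub_eq_zero]
  exact hprim.pow_ne_one_of_pos_of_lt hm.ne' hmn

theorem eq_of_dvd_cyclotomic_eval (hn : n ≠ 0) {r : ℕ} (hq : q.Prime) (hr : r.Prime)
    (hqn : q ∣ n) (hrn : r ∣ n) (hqN : (q : ℤ) ∣ (cyclotomic n ℤ).eval a)
    (hrN : (r : ℤ) ∣ (cyclotomic n ℤ).eval a) : q = r := by
  by_contra hne
  have hrq : r ∣ q - 1 := (Nat.dvd_ordCompl_of_dvd_not_dvd hrn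
    fun h ↦ hne ((Nat.prime_dvd_prime_iff_eq hq hr).1 h)).trans
    (ordCompl_dvd_sub_one_of_dvd_cyclotomic_eval hn hq hqN)
  have hqr : q ∣ r - 1 := (Nat.dvd_ordCompl_of_dvd_not_dvd hqn
    fun h ↦ hne ((Nat.prime_dvd_prime_iff_eq hr hq).1 h).symm).trans
    (ordCompl_dvd_sub_one_of_dvd_cyclotomic_eval hn hr hrN)
  have := Nat.le_of_dvd (by have := hq.two_le; omega) hrq
  have := Nat.le_of_dvd (by have := hr.two_le; omega) hqr
  omega

end ModPrime

theorem cyclotomic_dvd_geom_sum_X_pow_div {R : Type*} [CommRing R] [IsDomain R] {n q : ℕ}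
    (hn : n ≠ 0) (hqn : q ∣ n) (hq : 1 < q) :
    cyclotomic n R ∣ ∑ i ∈ range q, (X ^ (n / q)) ^ i := by
  have hdiv : n / q ∈ n.properDivisors :=
    Nat.mem_properDivisors.2 ⟨Nat.div_dvd_of_dvd hqn, Nat.div_lt_self (by omega) hq⟩
  have hXn : (X : R[X]) ^ n - 1 = (X ^ (n / q) - 1) * ∑ i ∈ range q, (X ^ (n / q)) ^ i := by
    rw [mul_geom_sum, ← pow_mul, Nat.div_mul_cancel hqn]
  have hne : (X : R[X]) ^ (n / q) - 1 ≠ 0 := by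
    simpa using X_pow_sub_C_ne_zero (Nat.div_pos (Nat.le_of_dvd (by omega) hqn) (by omega)) (1 : R)
  have := X_pow_sub_one_mul_cyclotomic_dvd_X_pow_sub_one_of_dvd R hdiv
  rwa [hXn, mul_dvd_mul_iff_left hne] at this

theorem not_sq_dvd_geom_sum_of_dvd_sub_one {q : ℕ} (hq : q.Prime) (hodd : Odd q) {c : ℤ}
    (hc : (q : ℤ) ∣ c - 1) : ¬(q : ℤ) ^ 2 ∣ ∑ i ∈ range q, c ^ i := by
  obtain ⟨b, hb⟩ := hc
  have h := odd_sq_dvd_geom_sum₂_sub (R := ℤ) 1 b hodd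
  simp only [one_pow, mul_one, ← eq_add_of_sub_eq' hb] at h
  intro hsum
  have hqq : (q : ℤ) * q ∣ q * 1 := by simpa [← pow_two] using (dvd_sub_right hsum).1 h
  exact Int.natCast_dvd_natCast.not.2 hq.not_dvd_one
    ((mul_dvd_mul_iff_left (by exact_mod_cast hq.ne_zero)).1 hqq)

theorem sq_not_dvd_cyclotomic_eval {a : ℤ} {n q : ℕ} (h2n : 2 < n) (hq : q.Prime) (hqn : q ∣ n)
    (hqN : (q : ℤ) ∣ (cyclotomic n ℤ).eval a) : ¬(q : ℤ) ^ 2 ∣ (cyclotomic n ℤ).eval a := by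
  have hn : n ≠ 0 := by omega
  have hsum : (cyclotomic n ℤ).eval a ∣ ∑ i ∈ range q, (a ^ (n / q)) ^ i := by
    simpa [eval_finsetSum] using
      eval_dvd (x := a) (cyclotomic_dvd_geom_sum_X_pow_div hn hqn hq.one_lt)
  have hc := dvd_pow_div_sub_one_of_dvd_cyclotomic_eval hn hq hqn hqN
  intro hsq
  rcases hq.eq_two_or_odd' with rfl | hodd
  · -- `n` is a power of two, so the geometric sum is `1 + b ^ 2` with `b = a ^ (n / 4)` odd.
    obtain ⟨k, hk⟩ : ∃ k, n = 2 ^ k := ⟨n.factorization 2, by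
      have := Nat.ordProj_mul_ordCompl_eq_self n 2
      rwa [Nat.dvd_one.1 (ordCompl_dvd_sub_one_of_dvd_cyclotomic_eval hn hq hqN), mul_one,
        eq_comm] at this⟩
    have h4n : 4 ∣ n := by
      have hk2 : 2 ≤ k := by
        by_contra hk2
        have := Nat.pow_le_pow_right two_pos (show k ≤ 1 by omega)
        omega
      rw [hk]
      exact pow_dvd_pow 2 hk2
    have hsquare : a ^ (n / 2) = (a ^ (n / 4)) ^ 2 := by rw [← pow_mul]; congr 1; omega
    rw [hsquare] at hc hsum
    have hodd : Odd (a ^ (n / 4)) := by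
      obtain ⟨t, ht⟩ := hc
      push_cast at ht
      exact Int.odd_pow.1 ⟨t, by linarith⟩ |>.resolve_right two_ne_zero
    have := Int.sq_mod_four_eq_one_of_odd hodd
    simp only [sum_range_succ, sum_range_zero, pow_zero, pow_one, zero_add] at hsum
    have := hsq.trans hsum
    omega
  · exact not_sq_dvd_geom_sum_of_dvd_sub_one hq hodd hc (hsq.trans hsum)

theorem Nat.eq_of_unique_prime_dvd_of_not_sq_dvd {M q : ℕ} (hqM : q ∣ M)
    (huniq : ∀ r : ℕ, r.Prime → r ∣ M → r = q) (hsq : ¬q ^ 2 ∣ M) : M = q := by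
  obtain ⟨t, rfl⟩ := hqM
  suffices t = 1 by simp [this]
  refine Nat.eq_one_iff_not_exists_prime_dvd.2 fun r hr hrt ↦ hsq ?_
  rw [huniq r hr (dvd_mul_of_dvd_right hrt q)] at hrt
  exact pow_two q ▸ mul_dvd_mul_left q hrt

theorem cyclotomic_eval_eq_prime {a : ℤ} {n : ℕ} (h2n : 2 < n) (ha : 1 < a)
    (hdvd : ∀ p : ℕ, p.Prime → (p : ℤ) ∣ (cyclotomic n ℤ).eval a → p ∣ n) :
    ∃ q : ℕ, q.Prime ∧ q ∣ n ∧ (cyclotomic n ℤ).eval a = q := by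
  obtain ⟨q, hq, hqN⟩ :=
    Nat.exists_prime_and_dvd (one_lt_natAbs_cyclotomic_eval (n := n) (by omega) ha).ne'
  have hqN : (q : ℤ) ∣ (cyclotomic n ℤ).eval a := Int.natCast_dvd.2 hqN
  have hqn := hdvd q hq hqN
  refine ⟨q, hq, hqn, ?_⟩
  rw [← Int.natAbs_of_nonneg (cyclotomic_pos h2n a).le, Nat.cast_inj]
  refine Nat.eq_of_unique_prime_dvd_of_not_sq_dvd (Int.natCast_dvd.1 hqN) (fun r hr hrN ↦ ?_) ?_
  · have hrN : (r : ℤ) ∣ (cyclotomic n ℤ).eval a := Int.natCast_dvd.2 hrN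
    exact eq_of_dvd_cyclotomic_eval (by omega) hr hq (hdvd r hr hrN) hqn hrN hqN
  · rw [← Int.natCast_dvd, Nat.cast_pow]
    exact sq_not_dvd_cyclotomic_eval h2n hq hqn hqN

theorem prime_lt_cyclotomic_eval {b : ℤ} {n q : ℕ} (hn : n ≠ 0) (hq : q.Prime) (hqn : q ∣ n)
    (hb : 3 ≤ b) : (q : ℤ) < (cyclotomic n ℤ).eval b := by
  have hφ : q - 1 ≤ n.totient := Nat.le_of_dvd (Nat.totient_pos.2 (Nat.pos_of_ne_zero hn))
    (Nat.totient_prime hq ▸ Nat.totient_dvd_of_dvd hqn)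
  have hq2 : q ≤ 2 ^ (q - 1) := by have := @Nat.lt_two_pow_self (q - 1); omega
  have hbR : (3 : ℝ) ≤ b := by exact_mod_cast hb
  have hlt := sub_one_pow_totient_lt_cyclotomic_eval (q := (b : ℝ))
    (le_trans hq.two_le (Nat.le_of_dvd (Nat.pos_of_ne_zero hn) hqn)) (by linarith)
  rw [← cast_cyclotomic_eval] at hlt
  suffices (q : ℝ) ≤ ((b : ℝ) - 1) ^ n.totient by exact_mod_cast this.trans_lt hlt
  calc (q : ℝ) ≤ 2 ^ (q - 1) := by exact_mod_cast hq2
    _ ≤ 2 ^ n.totient := pow_le_pow_right₀ one_le_two hφ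
    _ ≤ ((b : ℝ) - 1) ^ n.totient := pow_le_pow_left₀ zero_le_two (by linarith) _

theorem three_mul_lt_two_pow {q : ℕ} (hq : 4 ≤ q) : 3 * q < 2 ^ q := by
  obtain ⟨r, rfl⟩ := Nat.exists_eq_add_of_le' hq
  have := @Nat.lt_two_pow_self r
  rw [pow_add]
  omega

theorem mul_cyclotomic_eval_two_lt_cyclotomic_eval_two_pow {m q : ℕ} (hm : 3 ≤ m) (hq : 4 ≤ q) :
    (q : ℝ) * (cyclotomic m ℝ).eval 2 < (cyclotomic m ℝ).eval (2 ^ q) := by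
  have ht : m.totient ≠ 0 := (Nat.totient_pos.2 (by omega)).ne'
  have h3q : (3 * q : ℝ) ≤ 2 ^ q - 1 := by
    have := three_mul_lt_two_pow hq
    have : (3 * q + 1 : ℝ) ≤ 2 ^ q := by exact_mod_cast this
    linarith
  have hup := cyclotomic_eval_lt_add_one_pow_totient hm one_lt_two
  norm_num at hup
  calc (q : ℝ) * (cyclotomic m ℝ).eval 2 < q * 3 ^ m.totient := by gcongr
    _ ≤ (q : ℝ) ^ m.totient * 3 ^ m.totient := by
        gcongr; exact le_self_pow₀ (by exact_mod_cast (by omega : 1 ≤ q)) ht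
    _ = (3 * q : ℝ) ^ m.totient := by ring
    _ ≤ (2 ^ q - 1) ^ m.totient := by gcongr
    _ < (cyclotomic m ℝ).eval (2 ^ q) :=
        sub_one_pow_totient_lt_cyclotomic_eval (by omega) (one_lt_pow₀ one_lt_two (by omega))

theorem eq_two_and_eq_three_of_cyclotomic_mul_prime_eval_two {m q : ℕ} (hq : q.Prime) (hm0 : 0 < m)
    (hm : m ∣ q - 1) (h : (cyclotomic (m * q) ℤ).eval 2 = q) : m = 2 ∧ q = 3 := by
  have hmq : m < q := by have := Nat.le_of_dvd (by have := hq.two_le; omega) hm; omega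
  have hkey : (cyclotomic m ℤ).eval (2 ^ q) = q * (cyclotomic m ℤ).eval 2 := by
    rw [← h, ← eval_mul, ← expand_eval, cyclotomic_expand_eq_cyclotomic_mul hq
      fun h ↦ absurd (Nat.le_of_dvd hm0 h) (by omega)]
  obtain rfl | rfl | hm3 : m = 1 ∨ m = 2 ∨ 3 ≤ m := by omega
  · exfalso
    simp only [cyclotomic_one, eval_sub, eval_X, eval_one] at hkey
    have hkey : 2 ^ q = q + 1 := by exact_mod_cast (by linarith : (2 : ℤ) ^ q = q + 1)
    obtain hq4 | hq4 := lt_or_ge q 4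
    · interval_cases q <;> norm_num at hkey
    · have := three_mul_lt_two_pow hq4
      omega
  · simp only [cyclotomic_two, eval_add, eval_X, eval_one] at hkey
    have hkey : 2 ^ q + 1 = 3 * q := by exact_mod_cast (by linarith : (2 : ℤ) ^ q + 1 = 3 * q)
    refine ⟨rfl, ?_⟩
    obtain hq4 | hq4 := lt_or_ge q 4
    · omega
    · have := three_mul_lt_two_pow hq4
      omega
  · exfalso
    have := mul_cyclotomic_eval_two_lt_cyclotomic_eval_two_pow hm3 (q := q) (by omega)
    have hkeyR := congrArg (Int.cast : ℤ → ℝ) hkey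
    push_cast [cast_cyclotomic_eval] at hkeyR
    linarith

theorem eq_two_and_eq_six_of_cyclotomic_eval_eq_prime {a : ℤ} {n q : ℕ} (hn : n ≠ 0) (ha : 1 < a)
    (hq : q.Prime) (hqn : q ∣ n) (h : (cyclotomic n ℤ).eval a = q) : a = 2 ∧ n = 6 := by
  have hm : ordCompl[q] n ∣ q - 1 :=
    ordCompl_dvd_sub_one_of_dvd_cyclotomic_eval hn hq h.symm.dvd
  have hk := hq.factorization_pos_of_dvd hn hqn
  set j := n.factorization q - 1
  have hnm : n = ordCompl[q] n * q * q ^ j := by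
    conv_lhs => rw [← Nat.ordProj_mul_ordCompl_eq_self n q]
    rw [mul_assoc, ← pow_succ', Nat.sub_add_cancel hk, mul_comm]
  have hred : (cyclotomic (ordCompl[q] n * q) ℤ).eval (a ^ q ^ j) = q := by
    rw [← expand_eval, cyclotomic_expand_pow_eq_cyclotomic hq (dvd_mul_left q _), ← hnm, h]
  by_cases hb : 3 ≤ a ^ q ^ j
  · exact absurd hred (prime_lt_cyclotomic_eval (Nat.mul_ne_zero (Nat.ordCompl_pos q hn).ne'
      hq.ne_zero) hq (dvd_mul_left q _) hb).ne'
  have ha2 : a = 2 := by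
    have := le_self_pow₀ ha.le (pow_ne_zero j hq.ne_zero)
    omega
  subst ha2
  have hj : j = 0 := by
    by_contra hj
    have := pow_le_pow_right₀ (one_le_two : (1 : ℤ) ≤ 2) (Nat.one_lt_pow hj hq.one_lt)
    omega
  rw [hj, pow_zero, pow_one] at hred
  obtain ⟨hm2, rfl⟩ :=
    eq_two_and_eq_three_of_cyclotomic_mul_prime_eval_two hq (Nat.ordCompl_pos q hn) hm hred
  rw [hnm, hm2, hj]
  exact ⟨rfl, rfl⟩

theorem cyclotomic_has_primitive_prime_factor
    (a : ℤ) (n : ℕ) (ha : 1 < a) (hn : 0 < n) :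
    (∃ p : ℕ, p.Prime ∧ (p : ℤ) ∣ (Polynomial.cyclotomic n ℤ).eval a ∧
      ∀ m : ℕ, 0 < m → m < n → ¬ (p : ℤ) ∣ a ^ m - 1) ∨
    (a = 2 ∧ n = 1) ∨ (a = 2 ∧ n = 6) ∨ (n = 2 ∧ ∃ k : ℕ, a + 1 = 2 ^ k) := by
  by_cases hprim : ∃ q : ℕ, q.Prime ∧ (q : ℤ) ∣ (cyclotomic n ℤ).eval a ∧ ¬q ∣ n
  · obtain ⟨q, hq, hqN, hqn⟩ := hprim
    exact Or.inl ⟨q, hq, hqN, fun m hm hmn ↦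
      not_dvd_pow_sub_one_of_dvd_cyclotomic_eval hq hqn hqN hm hmn⟩
  push Not at hprim
  right
  obtain rfl | rfl | h2n : n = 1 ∨ n = 2 ∨ 2 < n := by omega
  · simp only [cyclotomic_one, eval_sub, eval_X, eval_one] at hprim
    have : (a - 1).natAbs = 1 := Nat.eq_one_iff_not_exists_prime_dvd.2 fun p hp hpa ↦
      hp.one_lt.ne' (Nat.dvd_one.1 (hprim p hp (Int.natCast_dvd.2 hpa)))
    exact Or.inl ⟨by omega, rfl⟩
  · simp only [cyclotomic_two, eval_add, eval_X, eval_one] at hprim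
    obtain ⟨k, hk⟩ : ∃ k, (a + 1).natAbs = 2 ^ k :=
      ⟨_, Nat.eq_prime_pow_of_unique_prime_dvd (by omega) fun hp hpa ↦
        (Nat.prime_dvd_prime_iff_eq hp Nat.prime_two).1 (hprim _ hp (Int.natCast_dvd.2 hpa))⟩
    refine Or.inr (Or.inr ⟨rfl, k, ?_⟩)
    rw [← Int.natAbs_of_nonneg (by omega : 0 ≤ a + 1), hk, Nat.cast_pow, Nat.cast_ofNat]
  · obtain ⟨q, hq, hqn, hN⟩ := cyclotomic_eval_eq_prime h2n ha hprim
    exact Or.inr (Or.inl (eq_two_and_eq_six_of_cyclotomic_eval_eq_prime hn.ne' ha hq hqn hN))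
end

section
/- Let l be an odd prime and set D = (−1)^((l−1)/2) · l. Then there exist polynomials P, Q with integer coefficients such that 4 · Φ_l = P² − D · Q² in ℤ[X], where Φ_l is the l-th cyclotomic polynomial. -/
/-!
Gauss's argument. Let `ζ` be a primitive `l`-th root of unity in the `l`-th cyclotomic field `K`
and `χ` the quadratic character mod `l`. Splitting the roots `ζ^a` of `Φ_l` according to
`χ a = ±1` factors `Φ_l = f₊ f₋` over `K`. The automorphism `ζ ↦ ζ^t` fixes `f₊`, `f₋` and the Gauss
sum `τ = ∑ χ a ζ^a` when `χ t = 1`, and swaps `f₊`, `f₋` and negates `τ` when `χ t = -1`. So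
`P = f₊ + f₋` and `R = τ (f₊ - f₋)` are Galois invariant with integral coefficients, hence lie in
`ℤ[X]`, and as `τ² = D`,
  `4 D Φ_l = τ² ((f₊ + f₋)² - (f₊ - f₋)²) = D P² - R²`.
Since `D = ±l` is prime, `D ∣ R`, and cancelling `D` from `R = D Q` gives `4 Φ_l = P² - D Q²`.
-/

open Polynomial Finset AddChar

theorem isIntegral_coeff_prod_X_sub_C {R K ι : Type*} [CommRing R] [CommRing K] [Algebra R K]
    (s : Finset ι) {v : ι → K} (hv : ∀ i, IsIntegral R (v i)) (n : ℕ) :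
    IsIntegral R ((∏ i ∈ s, (X - C (v i))).coeff n) := by
  have hlift : ∏ i ∈ s, (X - C (v i)) =
      (∏ i ∈ s, (X - C (⟨v i, hv i⟩ : integralClosure R K))).map (algebraMap _ K) := by
    simp [Polynomial.map_prod]
  rw [hlift, coeff_map]
  exact (coeff _ n : integralClosure R K).2

theorem mem_lifts_of_forall_map_algEquiv_eq (R : Type*) {F K : Type*} [CommRing R] [IsDomain R]
    [IsIntegrallyClosed R] [Field F] [Algebra R F] [IsFractionRing R F] [Field K] [Algebra F K]
    [Algebra R K] [IsScalarTower R F K] [FiniteDimensional F K] [IsGalois F K] {p : K[X]}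
    (hfix : ∀ σ : K ≃ₐ[F] K, p.map (σ : K →+* K) = p) (hint : ∀ n, IsIntegral R (p.coeff n)) :
    p ∈ lifts (algebraMap R K) := by
  refine lifts_iff_coeff_lifts _ |>.mpr fun n => ?_
  obtain ⟨x, hx⟩ := (IsGalois.mem_range_algebraMap_iff_fixed (p.coeff n)).mpr fun σ => by
    simpa using congrArg (coeff · n) (hfix σ)
  have hint' := hint n
  rw [← hx, isIntegral_algebraMap_iff (algebraMap F K).injective] at hint'
  obtain ⟨r, rfl⟩ := IsIntegrallyClosed.isIntegral_iff.mp hint'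
  exact ⟨r, by rw [← hx, ← IsScalarTower.algebraMap_apply]⟩

theorem prod_units_X_sub_C_zmodChar_eq_cyclotomic {K : Type*} [CommRing K] [IsDomain K] {n : ℕ}
    [NeZero n] {ζ : K} (hζ : IsPrimitiveRoot ζ n) :
    ∏ a : (ZMod n)ˣ, (X - C (zmodChar n hζ.pow_eq_one a)) = cyclotomic n K := by
  classical
  set ψ := zmodChar n hζ.pow_eq_one
  have hprim (a : (ZMod n)ˣ) : IsPrimitiveRoot (ψ a) n :=
    hζ.pow_of_coprime _ (ZMod.val_coe_unit_coprime a)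
  have hinj : Function.Injective fun a : (ZMod n)ˣ => ψ a := fun a b h =>
    Units.ext <| ZMod.val_injective n <| hζ.pow_inj (ZMod.val_lt _) (ZMod.val_lt _) h
  have himage : univ.image (fun a : (ZMod n)ˣ => ψ a) = primitiveRoots n K := by
    refine eq_of_subset_of_card_le (fun x hx => ?_) ?_
    · obtain ⟨a, -, rfl⟩ := mem_image.mp hx
      exact (mem_primitiveRoots (NeZero.pos n)).mpr (hprim a)
    · rw [hζ.card_primitiveRoots, card_image_of_injective _ hinj, card_univ,
        ZMod.card_units_eq_totient]
  rw [cyclotomic_eq_prod_X_sub_primitiveRoots hζ, ← himage, prod_image fun a _ b _ h => hinj h]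

theorem algEquiv_apply_zmodChar {R K : Type*} [CommRing R] [CommRing K] [IsDomain K] [Algebra R K]
    {n : ℕ} [NeZero n] {ζ : K} (hζ : IsPrimitiveRoot ζ n) (σ : K ≃ₐ[R] K) (a : ZMod n) :
    σ (zmodChar n hζ.pow_eq_one a) = zmodChar n hζ.pow_eq_one (hζ.autToPow R σ * a) := by
  rw [zmodChar_apply, zmodChar_apply, ZMod.val_mul, ← pow_eq_pow_mod _ hζ.pow_eq_one, pow_mul,
    hζ.autToPow_spec R σ, map_pow]

theorem exists_eq_sq_sub_mul_sq_of_mul_eq {R : Type*} [CommRing R] [IsDomain R] {d a p r : R}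
    (hd : Prime d) (h : d * a = d * p ^ 2 - r ^ 2) : ∃ q, a = p ^ 2 - d * q ^ 2 := by
  obtain ⟨q, rfl⟩ : d ∣ r := hd.dvd_of_dvd_pow (n := 2) ⟨p ^ 2 - a, by linear_combination h⟩
  exact ⟨q, mul_left_cancel₀ hd.ne_zero (by linear_combination h)⟩

section QuadraticCharFactor

variable {F K : Type*} [Field F] [Fintype F] [DecidableEq F] [CommRing K]

noncomputable def quadraticCharFactor (ψ : AddChar F K) (c : ℤ) : K[X] :=
  ∏ a ∈ univ.filter (fun a : Fˣ => quadraticChar F a = c), (X - C (ψ a))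

theorem quadraticCharFactor_one_mul_neg_one (ψ : AddChar F K) :
    quadraticCharFactor ψ 1 * quadraticCharFactor ψ (-1) = ∏ a : Fˣ, (X - C (ψ a)) := by
  have hnonres : univ.filter (fun a : Fˣ => ¬ quadraticChar F a = 1) =
      univ.filter (fun a : Fˣ => quadraticChar F a = -1) := by
    ext a
    have := quadraticChar_dichotomy a.ne_zero
    simp only [mem_filter, mem_univ, true_and]
    omega
  rw [quadraticCharFactor, quadraticCharFactor, ← hnonres, prod_filter_mul_prod_filter_not]

theorem map_quadraticCharFactor (ψ : AddChar F K) {σ : K →+* K} (t : Fˣ)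
    (hσ : ∀ a, σ (ψ a) = ψ (t * a)) (c : ℤ) :
    (quadraticCharFactor ψ c).map σ = quadraticCharFactor ψ (quadraticChar F t * c) := by
  rw [quadraticCharFactor, Polynomial.map_prod]
  refine prod_equiv (Equiv.mulLeft t) (fun a => ?_) (fun a _ => ?_)
  · have := quadraticChar_dichotomy t.ne_zero
    simp only [mem_filter, mem_univ, true_and, Equiv.coe_mulLeft, Units.val_mul, map_mul]
    rcases this with h | h <;> rw [h] <;> omega
  · simp [hσ]

noncomputable def quadraticGaussSum (ψ : AddChar F K) : K :=
  gaussSum ((quadraticChar F).ringHomComp (Int.castRingHom K)) ψ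

theorem map_quadraticGaussSum (ψ : AddChar F K) {σ : K →+* K} (t : Fˣ)
    (hσ : ∀ a, σ (ψ a) = ψ (t * a)) :
    σ (quadraticGaussSum ψ) = quadraticChar F t * quadraticGaussSum ψ := by
  set χ := (quadraticChar F).ringHomComp (Int.castRingHom K)
  have hσχ : ∀ a, σ (χ a) = χ a := fun a => map_intCast σ _
  have hστ : σ (gaussSum χ ψ) = gaussSum χ (ψ.mulShift t) := by
    simp only [gaussSum, map_sum, map_mul, hσχ, hσ, AddChar.mulShift_apply]
  have hχt : ((quadraticChar F t : ℤ) : K) ^ 2 = 1 := by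
    rw [← Int.cast_pow, quadraticChar_sq_one t.ne_zero, Int.cast_one]
  rw [quadraticGaussSum, hστ, ← gaussSum_mulShift χ ψ t, ← mul_assoc]
  change _ = ((quadraticChar F t : ℤ) : K) * (quadraticChar F t : ℤ) * _
  rw [← sq, hχt, one_mul]

theorem map_quadraticCharFactor_one_add_neg_one (ψ : AddChar F K) {σ : K →+* K} (t : Fˣ)
    (hσ : ∀ a, σ (ψ a) = ψ (t * a)) :
    (quadraticCharFactor ψ 1 + quadraticCharFactor ψ (-1)).map σ =
      quadraticCharFactor ψ 1 + quadraticCharFactor ψ (-1) := by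
  rcases quadraticChar_dichotomy t.ne_zero with h | h <;>
    simp [map_quadraticCharFactor ψ t hσ, h, add_comm]

theorem map_quadraticGaussSum_mul_quadraticCharFactor_one_sub_neg_one (ψ : AddChar F K)
    {σ : K →+* K} (t : Fˣ) (hσ : ∀ a, σ (ψ a) = ψ (t * a)) :
    (C (quadraticGaussSum ψ) * (quadraticCharFactor ψ 1 - quadraticCharFactor ψ (-1))).map σ =
      C (quadraticGaussSum ψ) * (quadraticCharFactor ψ 1 - quadraticCharFactor ψ (-1)) := by
  rcases quadraticChar_dichotomy t.ne_zero with h | h <;>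
    simp [map_quadraticCharFactor ψ t hσ, map_quadraticGaussSum ψ t hσ, h]
  ring

theorem quadraticGaussSum_sq [IsDomain K] (hF : ringChar F ≠ 2) (hK : ringChar K ≠ 2)
    {ψ : AddChar F K} (hψ : ψ.IsPrimitive) :
    quadraticGaussSum ψ ^ 2 = quadraticChar F (-1) * Fintype.card F := by
  refine gaussSum_sq (MulChar.ne_one_iff.mpr ?_) ((quadraticChar_isQuadratic F).comp _) hψ
  obtain ⟨a, ha⟩ := quadraticChar_exists_neg_one' hF
  exact ⟨a, by simp [MulChar.ringHomComp_apply, ha, Ring.neg_one_ne_one_of_char_ne_two hK]⟩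

end QuadraticCharFactor

theorem quadraticChar_zmod_neg_one {l : ℕ} [Fact l.Prime] (hl : Odd l) :
    quadraticChar (ZMod l) (-1) = (-1) ^ ((l - 1) / 2) := by
  have hl2 : ringChar (ZMod l) ≠ 2 := by
    rw [ZMod.ringChar_zmod_n]; rintro rfl; exact absurd hl (by decide)
  rw [quadraticChar_neg_one hl2, ZMod.card, ZMod.χ₄_eq_neg_one_pow (Nat.odd_iff.mp hl)]
  obtain ⟨k, rfl⟩ := hl
  simp [Nat.mul_add_div two_pos]

theorem exists_mul_four_cyclotomic_eq (K : Type*) [Field K] [Algebra ℚ K] {l : ℕ} [Fact l.Prime]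
    [IsCyclotomicExtension {l} ℚ K] (hl : l ≠ 2) :
    ∃ P R : ℤ[X], C (quadraticChar (ZMod l) (-1) * l) * (4 * cyclotomic l ℤ) =
      C (quadraticChar (ZMod l) (-1) * l) * P ^ 2 - R ^ 2 := by
  classical
  have := IsCyclotomicExtension.isGalois {l} ℚ K
  have := IsCyclotomicExtension.finiteDimensional {l} ℚ K
  have := charZero_of_injective_algebraMap (algebraMap ℚ K).injective
  have hζ := IsCyclotomicExtension.zeta_spec l ℚ K
  set ψ := zmodChar l hζ.pow_eq_one
  set f := quadraticCharFactor ψ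
  set τ := quadraticGaussSum ψ
  have hσ (σ : K ≃ₐ[ℚ] K) (a : ZMod l) : σ (ψ a) = ψ (hζ.autToPow ℚ σ * a) :=
    algEquiv_apply_zmodChar hζ σ a
  have hψ (a : ZMod l) : IsIntegral ℤ (ψ a) := (hζ.isIntegral (NeZero.pos l)).pow _
  have hf (c : ℤ) (n : ℕ) : IsIntegral ℤ ((f c).coeff n) :=
    isIntegral_coeff_prod_X_sub_C (ι := (ZMod l)ˣ) _ (fun a => hψ a) n
  have hτ : IsIntegral ℤ τ := IsIntegral.sum _ fun a _ =>
    (isIntegral_algebraMap (x := quadraticChar (ZMod l) a)).mul (hψ a)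
  obtain ⟨P, hP⟩ := mem_lifts _ |>.mp <| mem_lifts_of_forall_map_algEquiv_eq ℤ (p := f 1 + f (-1))
    (fun σ => map_quadraticCharFactor_one_add_neg_one ψ _ (hσ σ))
    (fun n => by rw [coeff_add]; exact (hf 1 n).add (hf (-1) n))
  obtain ⟨R, hR⟩ := mem_lifts _ |>.mp <|
    mem_lifts_of_forall_map_algEquiv_eq ℤ (p := C τ * (f 1 - f (-1)))
    (fun σ => map_quadraticGaussSum_mul_quadraticCharFactor_one_sub_neg_one ψ _ (hσ σ))
    (fun n => by rw [coeff_C_mul, coeff_sub]; exact hτ.mul ((hf 1 n).sub (hf (-1) n)))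
  have hτsq : τ ^ 2 = algebraMap ℤ K (quadraticChar (ZMod l) (-1) * l) := by
    rw [quadraticGaussSum_sq (by rwa [ZMod.ringChar_zmod_n]) (by rw [ringChar.eq_zero]; norm_num)
      (zmodChar_primitive_of_primitive_root l hζ)]
    simp
  refine ⟨P, R, Polynomial.map_injective (algebraMap ℤ K) (RingHom.injective_int _) ?_⟩
  simp only [Polynomial.map_mul, Polynomial.map_sub, Polynomial.map_pow, map_C, hP, hR,
    Polynomial.map_ofNat, map_cyclotomic, ← hτsq, f]
  rw [← prod_units_X_sub_C_zmodChar_eq_cyclotomic hζ, ← quadraticCharFactor_one_mul_neg_one, C_pow]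
  ring

theorem four_mul_cyclotomic_eq_sq_sub_sq
    (l : ℕ) (hl : l.Prime) (hlodd : Odd l)
    (D : ℤ) (hD : D = (-1) ^ ((l - 1) / 2) * l) :
    ∃ P Q : Polynomial ℤ,
      4 * Polynomial.cyclotomic l ℤ = P ^ 2 - Polynomial.C D * Q ^ 2 := by
  have := Fact.mk hl
  have hl2 : l ≠ 2 := by rintro rfl; exact absurd hlodd (by decide)
  have hD' : D = quadraticChar (ZMod l) (-1) * l := by rw [hD, quadraticChar_zmod_neg_one hlodd]
  have hDprime : Prime (C D) := prime_C_iff.mpr <| Int.prime_iff_natAbs_prime.mpr <| by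
    simpa [hD, Int.natAbs_mul, Int.natAbs_pow]
  -- The ascription puts this instance on the `Algebra ℚ` structure of a field of characteristic 0.
  have : IsCyclotomicExtension {l} ℚ (CyclotomicField l ℚ) :=
    CyclotomicField.isCyclotomicExtension l ℚ
  obtain ⟨P, R, h⟩ := exists_mul_four_cyclotomic_eq (CyclotomicField l ℚ) hl2
  obtain ⟨Q, hQ⟩ := exists_eq_sq_sub_mul_sq_of_mul_eq hDprime (hD' ▸ h)
  exact ⟨P, Q, hQ⟩
end

section
/- Let l be a prime with l ≥ 19, let ζ = exp(2πi/l) ∈ ℂ, and define ψ⁺(x) = ∏ (x − ζ^i) over those i ∈ {1, …, l−1} that are quadratic residues modulo l, and ψ⁻(x) = ∏ (x − ζ^i) over those i ∈ {1, …, l−1} that are quadratic non-residues modulo l. Then for every integer x with x ≥ l², the quantity P(x) = ψ⁺(x) + ψ⁻(x) satisfies |P(x) − 2·x^((l−1)/2) − x^((l−3)/2)| < x^((l−3)/2)/2, where |·| is the complex absolute value. -/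
/-!
Write `l = 2n + 3`. The quadratic residues and the non-residues in `{1, …, l - 1}` both number
`n + 1`, so each of `ψ⁺(x)`, `ψ⁻(x)` is `x ^ (n + 1) - s x ^ n + E`, where `s` is the sum of the
corresponding roots of unity and, expanding `∏ (1 - ζ ^ i / x)`, `|E| ≤ (n + 1)² x ^ n / x`.
The two sums `s` add up to `∑_{0 < i < l} ζ ^ i = -1`, which produces the term `x ^ n`, and the
two error terms together are below `x ^ n / 2` because `x ≥ l² > 4 (n + 1)²`.
-/

open Finset

section ProductExpansion

variable {ι R : Type*} [NormedCommRing R] [NormOneClass R]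

theorem norm_prod_one_add_sub_one_le (S : Finset ι) (w : ι → R) {t : ℝ}
    (hw : ∀ i ∈ S, ‖w i‖ ≤ t) : ‖∏ i ∈ S, (1 + w i) - 1‖ ≤ (1 + t) ^ #S - 1 := by
  classical
  induction S using Finset.induction_on with
  | empty => simp
  | @insert a S ha ih =>
    have hwa := hw a (mem_insert_self a S)
    have ht : 0 ≤ 1 + t := by linarith [norm_nonneg (w a)]
    have ih := ih fun i hi => hw i (mem_insert_of_mem hi)
    have h1 : ‖1 + w a‖ ≤ 1 + t := (norm_add_le _ _).trans (by rw [norm_one]; linarith)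
    rw [prod_insert ha, card_insert_of_notMem ha,
      show (1 + w a) * ∏ i ∈ S, (1 + w i) - 1 = (1 + w a) * (∏ i ∈ S, (1 + w i) - 1) + w a by
        ring]
    calc _ ≤ ‖1 + w a‖ * ‖∏ i ∈ S, (1 + w i) - 1‖ + ‖w a‖ :=
          (norm_add_le _ _).trans (add_le_add_left (norm_mul_le _ _) _)
      _ ≤ (1 + t) * ((1 + t) ^ #S - 1) + t := by gcongr
      _ = (1 + t) ^ (#S + 1) - 1 := by ring

theorem norm_prod_one_add_sub_one_sub_sum_le (S : Finset ι) (w : ι → R) {t : ℝ}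
    (hw : ∀ i ∈ S, ‖w i‖ ≤ t) :
    ‖∏ i ∈ S, (1 + w i) - 1 - ∑ i ∈ S, w i‖ ≤ (1 + t) ^ #S - 1 - #S * t := by
  classical
  induction S using Finset.induction_on with
  | empty => simp
  | @insert a S ha ih =>
    have hwa := hw a (mem_insert_self a S)
    have hwS : ∀ i ∈ S, ‖w i‖ ≤ t := fun i hi => hw i (mem_insert_of_mem hi)
    rw [prod_insert ha, sum_insert ha, card_insert_of_notMem ha,
      show (1 + w a) * ∏ i ∈ S, (1 + w i) - 1 - (w a + ∑ i ∈ S, w i)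
        = (∏ i ∈ S, (1 + w i) - 1 - ∑ i ∈ S, w i) + w a * (∏ i ∈ S, (1 + w i) - 1) by ring]
    calc _ ≤ ‖∏ i ∈ S, (1 + w i) - 1 - ∑ i ∈ S, w i‖ + ‖w a‖ * ‖∏ i ∈ S, (1 + w i) - 1‖ :=
          (norm_add_le _ _).trans (add_le_add_right (norm_mul_le _ _) _)
      _ ≤ ((1 + t) ^ #S - 1 - #S * t) + t * ((1 + t) ^ #S - 1) := by
          gcongr
          · exact ih hwS
          · exact (norm_nonneg _).trans hwa
          · exact norm_prod_one_add_sub_one_le S w hwS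
      _ = (1 + t) ^ (#S + 1) - 1 - ↑(#S + 1) * t := by push_cast; ring

theorem one_add_pow_le_of_mul_le_one {t : ℝ} (ht : 0 ≤ t) {n : ℕ} (hnt : n * t ≤ 1) :
    (1 + t) ^ n ≤ 1 + n * t + (n * t) ^ 2 := by
  have hexp := Real.abs_exp_sub_one_sub_id_le (x := n * t) (by rwa [abs_of_nonneg (by positivity)])
  calc (1 + t) ^ n ≤ Real.exp t ^ n := by
        gcongr
        linarith [Real.add_one_le_exp t]
    _ = Real.exp (n * t) := (Real.exp_nat_mul t n).symm
    _ ≤ 1 + n * t + (n * t) ^ 2 := by linarith [le_abs_self (Real.exp (n * t) - 1 - n * t)]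

theorem norm_prod_one_add_sub_one_sub_sum_le_sq (S : Finset ι) (w : ι → R) {t : ℝ}
    (ht : 0 ≤ t) (hw : ∀ i ∈ S, ‖w i‖ ≤ t) (hSt : #S * t ≤ 1) :
    ‖∏ i ∈ S, (1 + w i) - 1 - ∑ i ∈ S, w i‖ ≤ (#S * t) ^ 2 := by
  linarith [norm_prod_one_add_sub_one_sub_sum_le S w hw, one_add_pow_le_of_mul_le_one ht hSt]

end ProductExpansion

theorem norm_prod_sub_sub_pow_add_sum_mul_pow_le {ι K : Type*} [NormedField K]
    (S : Finset ι) (z : ι → K) (x : K) {n : ℕ} (hz : ∀ i ∈ S, ‖z i‖ ≤ 1) (hS : #S = n + 1)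
    (hx : n + 1 ≤ ‖x‖) :
    ‖∏ i ∈ S, (x - z i) - x ^ (n + 1) + (∑ i ∈ S, z i) * x ^ n‖
      ≤ (n + 1) ^ 2 * ‖x‖ ^ n / ‖x‖ := by
  have hx0 : 0 < ‖x‖ := lt_of_lt_of_le (by positivity) hx
  have hx_ne : x ≠ 0 := norm_pos_iff.mp hx0
  set w : ι → K := fun i => -(z i / x)
  have hprod : ∏ i ∈ S, (x - z i) = x ^ (n + 1) * ∏ i ∈ S, (1 + w i) := by
    rw [← hS, ← prod_const, ← prod_mul_distrib]
    refine prod_congr rfl fun i _ => ?_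
    simp only [w]
    field_simp
    ring
  have hsum : ∑ i ∈ S, w i = -(∑ i ∈ S, z i) / x := by
    simp only [w, sum_neg_distrib, sum_div, neg_div]
  have hw : ∀ i ∈ S, ‖w i‖ ≤ 1 / ‖x‖ := fun i hi => by
    simp only [w, norm_neg, norm_div]
    gcongr
    exact hz i hi
  have hSt : (#S : ℝ) * (1 / ‖x‖) ≤ 1 := by
    rw [hS, mul_one_div, div_le_one hx0]
    exact_mod_cast hx
  have hE := norm_prod_one_add_sub_one_sub_sum_le_sq S w (by positivity) hw hSt
  rw [hS] at hE
  calc _ = ‖x ^ (n + 1) * (∏ i ∈ S, (1 + w i) - 1 - ∑ i ∈ S, w i)‖ := by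
        rw [hprod, hsum]
        congr 1
        field_simp
        ring
    _ ≤ ‖x‖ ^ (n + 1) * (((n + 1 : ℕ) : ℝ) * (1 / ‖x‖)) ^ 2 := by
        rw [norm_mul, norm_pow]
        gcongr
    _ = (n + 1) ^ 2 * ‖x‖ ^ n / ‖x‖ := by
        push_cast
        field_simp
        ring

theorem norm_prod_add_prod_sub_two_mul_pow_sub_pow_lt {ι K : Type*} [NormedField K]
    {S T : Finset ι} {z : ι → K} {x : K} {n : ℕ} (hz : ∀ i, ‖z i‖ ≤ 1) (hS : #S = n + 1)
    (hT : #T = n + 1) (hsum : ∑ i ∈ S, z i + ∑ i ∈ T, z i = -1)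
    (hx : 4 * ((n : ℝ) + 1) ^ 2 < ‖x‖) :
    ‖∏ i ∈ S, (x - z i) + ∏ i ∈ T, (x - z i) - 2 * x ^ (n + 1) - x ^ n‖ < ‖x‖ ^ n / 2 := by
  have hxn : (n : ℝ) + 1 ≤ ‖x‖ := by nlinarith
  have hES := norm_prod_sub_sub_pow_add_sum_mul_pow_le S z x (fun i _ => hz i) hS hxn
  have hET := norm_prod_sub_sub_pow_add_sum_mul_pow_le T z x (fun i _ => hz i) hT hxn
  have hxpow : 0 < ‖x‖ ^ n := pow_pos (by nlinarith) n
  calc _ = ‖(∏ i ∈ S, (x - z i) - x ^ (n + 1) + (∑ i ∈ S, z i) * x ^ n)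
        + (∏ i ∈ T, (x - z i) - x ^ (n + 1) + (∑ i ∈ T, z i) * x ^ n)‖ := by
        congr 1
        linear_combination (-x ^ n) * hsum
    _ ≤ 2 * ((n + 1) ^ 2 * ‖x‖ ^ n / ‖x‖) := by linarith [norm_add_le_of_le hES hET]
    _ < ‖x‖ ^ n / 2 := by
        rw [mul_div_assoc', div_lt_div_iff₀ (by linarith) two_pos]
        nlinarith

theorem ZMod.isSquare_natCast_iff_exists_modEq {l : ℕ} [NeZero l] (i : ℕ) :
    IsSquare (i : ZMod l) ↔ ∃ a : ℕ, i ≡ a ^ 2 [MOD l] := by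
  simp only [← ZMod.natCast_eq_natCast_iff, Nat.cast_pow]
  constructor
  · rintro ⟨r, hr⟩
    exact ⟨r.val, by rw [ZMod.natCast_zmod_val, hr, sq]⟩
  · rintro ⟨a, ha⟩
    exact ⟨a, by rw [ha, sq]⟩

theorem FiniteField.two_mul_card_nonzero_squares_add_one {F : Type*} [Field F] [Fintype F]
    [DecidableEq F] [DecidablePred (IsSquare : F → Prop)]
    (hF : ringChar F ≠ 2) :
    2 * #{a : F | a ≠ 0 ∧ IsSquare a} + 1 = Fintype.card F := by
  have hpoint : ∀ a : F, quadraticChar F a + 1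
      = 2 * (if a ≠ 0 ∧ IsSquare a then 1 else 0) + (if a = 0 then 1 else 0) := fun a => by
    rw [quadraticChar_apply, quadraticCharFun]
    split_ifs <;> simp_all
  have hsum : ∑ a : F, (quadraticChar F a + 1) = Fintype.card F := by
    rw [sum_add_distrib, quadraticChar_sum_zero hF, sum_const, card_univ]
    simp
  rw [sum_congr rfl fun a _ => hpoint a, sum_add_distrib, ← mul_sum, sum_boole, sum_boole] at hsum
  rw [show #{a : F | a = 0} = 1 from card_eq_one.mpr ⟨0, by ext; simp⟩] at hsum
  exact_mod_cast hsum

open scoped Classical in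
theorem Nat.Prime.two_mul_card_quadResidues {l : ℕ} (hl : l.Prime) (hl2 : l ≠ 2) :
    2 * #{i ∈ Ico 1 l | ¬ l ∣ i ∧ ∃ a : ℕ, i ≡ a ^ 2 [MOD l]} = l - 1 := by
  have := Fact.mk hl
  have hsq := FiniteField.two_mul_card_nonzero_squares_add_one (F := ZMod l)
    (by rwa [ZMod.ringChar_zmod_n])
  rw [ZMod.card] at hsq
  suffices #{i ∈ Ico 1 l | ¬ l ∣ i ∧ ∃ a : ℕ, i ≡ a ^ 2 [MOD l]}
      = #{a : ZMod l | a ≠ 0 ∧ IsSquare a} by omega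
  refine card_nbij' Nat.cast ZMod.val (fun i hi => ?_) (fun a ha => ?_)
    (fun i hi => ZMod.val_cast_of_lt (mem_Ico.mp (mem_filter.mp hi).1).2)
    (fun a _ => ZMod.natCast_zmod_val a)
  · simp only [coe_filter, mem_Ico, Set.mem_ofPred_eq, mem_univ, true_and] at hi ⊢
    rw [Ne, ZMod.natCast_eq_zero_iff, ZMod.isSquare_natCast_iff_exists_modEq]
    exact hi.2
  · simp only [coe_filter, mem_Ico, Set.mem_ofPred_eq, mem_univ, true_and] at ha ⊢
    rw [← ZMod.isSquare_natCast_iff_exists_modEq, ← ZMod.natCast_eq_zero_iff, ZMod.natCast_zmod_val]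
    exact ⟨⟨Nat.one_le_iff_ne_zero.mpr ((ZMod.val_ne_zero a).mpr ha.1), ZMod.val_lt a⟩, ha⟩

theorem IsPrimitiveRoot.sum_Ico_one_pow {R : Type*} [CommRing R] [IsDomain R] {ζ : R} {k : ℕ}
    (h : IsPrimitiveRoot ζ k) (hk : 1 < k) : ∑ i ∈ Ico 1 k, ζ ^ i = -1 := by
  have hsum := h.geom_sum_eq_zero hk
  rw [sum_range_eq_add_Ico _ (by omega), pow_zero] at hsum
  linear_combination hsum

open scoped Classical in
theorem psi_sum_estimate
    (l : ℕ) (hl : l.Prime) (hl19 : 19 ≤ l)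
    (ζ : ℂ) (hζ : ζ = Complex.exp (2 * Real.pi * Complex.I / l))
    (ψp ψm : ℤ → ℂ)
    (hψp : ∀ x : ℤ, ψp x = ∏ i ∈ (Finset.Ico 1 l).filter
        (fun i => ¬ l ∣ i ∧ ∃ a : ℕ, i ≡ a ^ 2 [MOD l]), ((x : ℂ) - ζ ^ i))
    (hψm : ∀ x : ℤ, ψm x = ∏ i ∈ (Finset.Ico 1 l).filter
        (fun i => ¬ (¬ l ∣ i ∧ ∃ a : ℕ, i ≡ a ^ 2 [MOD l])), ((x : ℂ) - ζ ^ i))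
    (x : ℤ) (hx : (l : ℤ) ^ 2 ≤ x) :
    ‖ψp x + ψm x - 2 * (x : ℂ) ^ ((l - 1) / 2) - (x : ℂ) ^ ((l - 3) / 2)‖
      < (x : ℝ) ^ ((l - 3) / 2) / 2 := by
  set n := (l - 3) / 2
  have hprim : IsPrimitiveRoot ζ l := hζ ▸ Complex.isPrimitiveRoot_exp l hl.ne_zero
  have hcard_residues := hl.two_mul_card_quadResidues (by omega)
  have hcard := card_filter_add_card_filter_not (s := Ico 1 l)
    (fun i => ¬ l ∣ i ∧ ∃ a : ℕ, i ≡ a ^ 2 [MOD l])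
  rw [Nat.card_Ico] at hcard
  have hx0 : 0 ≤ x := (sq_nonneg (l : ℤ)).trans hx
  rw [hψp, hψm, show (l - 1) / 2 = n + 1 by omega, ← Complex.norm_int_of_nonneg hx0]
  refine norm_prod_add_prod_sub_two_mul_pow_sub_pow_lt (z := (ζ ^ ·))
    (fun i => by rw [norm_pow, hprim.norm'_eq_one hl.ne_zero, one_pow]) (by omega) (by omega) ?_ ?_
  · rw [sum_filter_add_sum_filter_not]
    exact hprim.sum_Ico_one_pow hl.one_lt
  · have hl_sq : (((2 * n + 3 : ℕ) : ℤ) : ℝ) ^ 2 ≤ x := by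
      rw [show 2 * n + 3 = l by omega]
      exact_mod_cast hx
    push_cast at hl_sq
    rw [Complex.norm_int_of_nonneg hx0]
    nlinarith [(n.cast_nonneg : (0 : ℝ) ≤ n)]
end

section
/- Let l be a prime with l ≥ 19, let p and q be distinct primes, and let x_1, x_2 be integers with 1 < x_1 < x_2 that are multiplicatively independent. If Φ_l(x_1) = p^{m_1} · q and Φ_l(x_2) = p^{m_2} · q for some nonnegative integers m_1, m_2, then x_2 > x_1^⌊(l+1)/6⌋. -/
open Finset

private lemma two_mul_add_one_le_two_pow (c : ℕ) (hc : 3 ≤ c) : 2 * c + 1 ≤ 2 ^ c := by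
  induction c with
  | zero => omega
  | succ n ih =>
    rcases Nat.lt_or_ge n 3 with h | h
    · interval_cases n <;> first | (exfalso; omega) | norm_num
    · have h1 := ih h
      have h2 : 2 ^ 3 ≤ 2 ^ n := Nat.pow_le_pow_right (by norm_num) h
      rw [pow_succ]
      omega

private lemma sq_not_dvd_geom_sum (l : ℕ) (hl2 : 2 ≤ l) (hlodd : l % 2 = 1)
    (x : ℤ) (hx : (l : ℤ) ∣ x - 1) :
    ¬ ((l : ℤ) ^ 2 ∣ ∑ t ∈ Finset.range l, x ^ t) := by
  intro hdvd
  have key : (∑ t ∈ Finset.range l, x ^ t) - l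
      = (x - 1) * ∑ t ∈ Finset.range l, ∑ s ∈ Finset.range t, x ^ s := by
    rw [Finset.mul_sum]
    have h1 : ∀ t : ℕ, (x - 1) * ∑ s ∈ Finset.range t, x ^ s = x ^ t - 1 := by
      intro t; rw [mul_comm, geom_sum_mul]
    calc (∑ t ∈ Finset.range l, x ^ t) - l
        = ∑ t ∈ Finset.range l, (x ^ t - 1) := by
          rw [Finset.sum_sub_distrib, Finset.sum_const, Finset.card_range]
          simp
      _ = ∑ t ∈ Finset.range l, (x - 1) * ∑ s ∈ Finset.range t, x ^ s := by
          simp_rw [h1]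
  have hx1 : ((x : ℤ) : ZMod l) = 1 := by
    have h0 : ((x - 1 : ℤ) : ZMod l) = 0 := by
      rw [ZMod.intCast_zmod_eq_zero_iff_dvd]; exact hx
    push_cast at h0
    linear_combination h0
  have hlsum : l ∣ ∑ t ∈ Finset.range l, t := by
    have h2 : (∑ t ∈ Finset.range l, t) * 2 = l * (l - 1) := Finset.sum_range_id_mul_two l
    obtain ⟨c, hc⟩ : ∃ c, l - 1 = 2 * c := ⟨(l - 1) / 2, by omega⟩
    refine ⟨c, ?_⟩
    have h3 : l * (l - 1) = 2 * (l * c) := by rw [hc]; ring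
    omega
  have hlM : (l : ℤ) ∣ ∑ t ∈ Finset.range l, ∑ s ∈ Finset.range t, x ^ s := by
    rw [← ZMod.intCast_zmod_eq_zero_iff_dvd]
    push_cast
    rw [hx1]
    simp only [one_pow, Finset.sum_const, Finset.card_range, nsmul_eq_mul, mul_one]
    rw [← Nat.cast_sum, ZMod.natCast_eq_zero_iff]
    exact hlsum
  have hdvd2 : (l : ℤ) ^ 2 ∣ (x - 1) * ∑ t ∈ Finset.range l, ∑ s ∈ Finset.range t, x ^ s := by
    rw [sq]; exact mul_dvd_mul hx hlM
  have hdvdl : (l : ℤ) ^ 2 ∣ (l : ℤ) := by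
    have h3 := dvd_sub hdvd (key ▸ hdvd2)
    simpa using h3
  have hpos : (0 : ℤ) < l := by exact_mod_cast Nat.lt_of_lt_of_le (by norm_num) hl2
  have h4 := Int.le_of_dvd hpos hdvdl
  nlinarith [hpos]

private lemma cyclic_pow_mem {G : Type*} [Group G] [Fintype G] [DecidableEq G] [IsCyclic G]
    {l : ℕ} (hl : 0 < l) {u v : G} (hu : orderOf u = l) (hv : v ^ l = 1) :
    ∃ i, i < l ∧ v = u ^ i := by
  classical
  set S : Finset G := Finset.univ.filter (fun a : G => a ^ l = 1) with hS
  have hcard : S.card ≤ l := IsCyclic.card_pow_eq_one_le hl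
  set T : Finset G := (Finset.range l).image (fun i => u ^ i) with hT
  have hTS : T ⊆ S := by
    intro a ha
    simp only [hT, Finset.mem_image, Finset.mem_range] at ha
    obtain ⟨i, _, rfl⟩ := ha
    simp only [hS, Finset.mem_filter, Finset.mem_univ, true_and]
    rw [← pow_mul, mul_comm, pow_mul, ← hu, pow_orderOf_eq_one, one_pow]
  have hTcard : T.card = l := by
    rw [hT, Finset.card_image_of_injOn, Finset.card_range]
    intro a ha b hb hab
    rw [Finset.coe_range, ← hu] at ha hb
    exact pow_injOn_Iio_orderOf ha hb hab
  have hST : T = S := Finset.eq_of_subset_of_card_le hTS (by omega)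
  have hvS : v ∈ S := by simp [hS, hv]
  rw [← hST, hT] at hvS
  simp only [Finset.mem_image, Finset.mem_range] at hvS
  obtain ⟨i, hi, hiv⟩ := hvS
  exact ⟨i, hi, hiv.symm⟩

private lemma key_bound (l c k : ℕ) (hl : l.Prime) (hlc : l = 2 * c + 1)
    (hk1 : 1 ≤ k) (h2k : 2 * k ≤ c)
    (x₁ x₂ : ℤ) (hx₁ : 1 < x₁) (hx₂ : 1 < x₂) (hx₂k : x₂ ≤ x₁ ^ k)
    (hindep : ∀ a b : ℕ, x₁ ^ a = x₂ ^ b → a = 0 ∧ b = 0)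
    (hlx : (l : ℤ) ≤ x₁ ^ c)
    (d : ℕ) (hdpp : ∃ r e, r.Prime ∧ d = r ^ e)
    (hd1 : (d : ℤ) ∣ x₁ ^ l - 1) (hd2 : (d : ℤ) ∣ x₂ ^ l - 1)
    (hdE : (d : ℤ) ∣ ∑ t ∈ Finset.range l, x₁ ^ t) :
    (d : ℤ) ≤ x₁ ^ c := by
  have hx₁0 : (0 : ℤ) < x₁ := by omega
  have hx₁1 : (1 : ℤ) ≤ x₁ := by omega
  have hxc1 : (1 : ℤ) ≤ x₁ ^ c := one_le_pow₀ hx₁1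
  obtain ⟨r, e, hr, rfl⟩ := hdpp
  rcases Nat.eq_zero_or_pos e with he0 | he
  · subst he0; simpa using hxc1
  have hrpos : 0 < r := hr.pos
  haveI : NeZero (r ^ e) := ⟨pow_ne_zero e hrpos.ne'⟩
  haveI : Fact r.Prime := ⟨hr⟩
  set d : ℕ := r ^ e with hd
  -- basic mod-d facts
  have hlpos : 0 < l := hl.pos
  have hl2 : 2 ≤ l := hl.two_le
  have hx1l : ((x₁ : ℤ) : ZMod d) ^ l = 1 := by
    have h0 : ((x₁ ^ l - 1 : ℤ) : ZMod d) = 0 := by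
      rw [ZMod.intCast_zmod_eq_zero_iff_dvd]; exact hd1
    push_cast at h0
    linear_combination h0
  have hx2l : ((x₂ : ℤ) : ZMod d) ^ l = 1 := by
    have h0 : ((x₂ ^ l - 1 : ℤ) : ZMod d) = 0 := by
      rw [ZMod.intCast_zmod_eq_zero_iff_dvd]; exact hd2
    push_cast at h0
    linear_combination h0
  -- units
  have hmk : ∀ y : ZMod d, y ^ l = 1 → y * y ^ (l - 1) = 1 := by
    intro y hy
    rw [← pow_succ']
    have : l - 1 + 1 = l := by omega
    rw [this]; exact hy
  set u₁ : (ZMod d)ˣ := Units.mkOfMulEqOne _ _ (hmk _ hx1l) with hu₁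
  set u₂ : (ZMod d)ˣ := Units.mkOfMulEqOne _ _ (hmk _ hx2l) with hu₂
  have hu₁v : (u₁ : ZMod d) = ((x₁ : ℤ) : ZMod d) := rfl
  have hu₂v : (u₂ : ZMod d) = ((x₂ : ℤ) : ZMod d) := rfl
  have hu₁l : u₁ ^ l = 1 := by
    ext
    rw [Units.val_pow_eq_pow_val, hu₁v, hx1l, Units.val_one]
  have hu₂l : u₂ ^ l = 1 := by
    ext
    rw [Units.val_pow_eq_pow_val, hu₂v, hx2l, Units.val_one]
  -- map down to ZMod r
  have hrd : r ∣ d := dvd_pow_self r he.ne'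
  set π : (ZMod d)ˣ →* (ZMod r)ˣ := ZMod.unitsMap hrd with hπ
  have hπval : ∀ w : (ZMod d)ˣ, ((π w : ZMod r)) = (ZMod.castHom hrd (ZMod r)) (w : ZMod d) := by
    intro w; rfl
  set v₁ : (ZMod r)ˣ := π u₁ with hv₁
  set v₂ : (ZMod r)ˣ := π u₂ with hv₂
  have hv₁val : (v₁ : ZMod r) = ((x₁ : ℤ) : ZMod r) := by
    rw [hv₁, hπval, hu₁v, map_intCast]
  have hv₂val : (v₂ : ZMod r) = ((x₂ : ℤ) : ZMod r) := by
    rw [hv₂, hπval, hu₂v, map_intCast]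
  have hv₁l : v₁ ^ l = 1 := by rw [hv₁, ← map_pow, hu₁l, map_one]
  have hv₂l : v₂ ^ l = 1 := by rw [hv₂, ← map_pow, hu₂l, map_one]
  have hordv₁ : orderOf v₁ = 1 ∨ orderOf v₁ = l :=
    Nat.Prime.eq_one_or_self_of_dvd hl _ (orderOf_dvd_of_pow_eq_one hv₁l)
  have hpowle : ∀ a b : ℕ, a ≤ b → x₁ ^ a ≤ x₁ ^ b :=
    fun a b hab => pow_le_pow_right₀ hx₁1 hab
  rcases hordv₁ with hord1 | hordl
  · -- v₁ = 1 : r ∣ x₁ - 1, hence r = l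
    have hv₁1 : v₁ = 1 := orderOf_eq_one_iff.mp hord1
    have hx1r : ((x₁ : ℤ) : ZMod r) = 1 := by
      rw [← hv₁val, hv₁1, Units.val_one]
    have hrE : (r : ℤ) ∣ ∑ t ∈ Finset.range l, x₁ ^ t :=
      dvd_trans (Int.natCast_dvd_natCast.mpr hrd) hdE
    have hrl : r ∣ l := by
      have h0 : ((∑ t ∈ Finset.range l, x₁ ^ t : ℤ) : ZMod r) = 0 := by
        rw [ZMod.intCast_zmod_eq_zero_iff_dvd]; exact hrE
      push_cast at h0
      rw [hx1r] at h0
      simp only [one_pow, Finset.sum_const, Finset.card_range, nsmul_eq_mul, mul_one] at h0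
      rwa [ZMod.natCast_eq_zero_iff] at h0
    have hrleq : r = l := (Nat.prime_dvd_prime_iff_eq hr hl).mp hrl
    rcases Nat.lt_or_ge e 2 with he1 | he2
    · have he' : e = 1 := by omega
      rw [hd, he', pow_one, hrleq]
      exact hlx
    · exfalso
      have hldvd : (l : ℤ) ∣ x₁ - 1 := by
        rw [← ZMod.intCast_zmod_eq_zero_iff_dvd]
        push_cast
        rw [← hrleq, hx1r]
        ring
      apply sq_not_dvd_geom_sum l hl2 (by omega) x₁ hldvd
      have hsq : ((l : ℤ)) ^ 2 ∣ (d : ℤ) := by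
        have : (l : ℕ) ^ 2 ∣ d := by rw [hd, ← hrleq]; exact pow_dvd_pow r he2
        exact_mod_cast Int.natCast_dvd_natCast.mpr this
      exact hsq.trans hdE
  · -- orderOf v₁ = l : extract i with x₂ ≡ x₁ ^ i mod d
    have hrneql : r ≠ l := by
      intro hre
      have h1 : orderOf v₁ ∣ Fintype.card (ZMod r)ˣ := orderOf_dvd_card
      rw [hordl, ZMod.card_units_eq_totient, Nat.totient_prime hr] at h1
      have h2 := Nat.le_of_dvd (by have := hr.two_le; omega) h1
      omega
    obtain ⟨i, hil, hv2i⟩ := cyclic_pow_mem hlpos hordl hv₂l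
    set w : (ZMod d)ˣ := u₂ * (u₁ ^ i)⁻¹ with hw
    have hwker : w ∈ π.ker := by
      rw [MonoidHom.mem_ker, hw, map_mul, map_inv, map_pow, ← hv₁, ← hv₂, ← hv2i,
        mul_inv_cancel]
    have hsurj : Function.Surjective π := ZMod.unitsMap_surjective hrd
    have hcard1 : Nat.card (ZMod d)ˣ = r ^ (e - 1) * (r - 1) := by
      rw [Nat.card_eq_fintype_card, ZMod.card_units_eq_totient, hd,
        Nat.totient_prime_pow hr he]
    have hquot : Nat.card ((ZMod d)ˣ ⧸ π.ker) = r - 1 := by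
      rw [Nat.card_congr (QuotientGroup.quotientKerEquivOfSurjective π hsurj).toEquiv,
        Nat.card_eq_fintype_card, ZMod.card_units_eq_totient, Nat.totient_prime hr]
    have hker : Nat.card π.ker = r ^ (e - 1) := by
      have h3 := Subgroup.card_eq_card_quotient_mul_card_subgroup π.ker
      rw [hcard1, hquot] at h3
      have hr1 : 0 < r - 1 := by have := hr.two_le; omega
      have h4 : (r - 1) * Nat.card π.ker = (r - 1) * r ^ (e - 1) := by
        rw [← h3]; ring
      exact Nat.eq_of_mul_eq_mul_left hr1 h4
    have hwpow : w ^ (r ^ (e - 1)) = 1 := by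
      have h5 : (⟨w, hwker⟩ : π.ker) ^ Nat.card π.ker = 1 := pow_card_eq_one'
      rw [hker] at h5
      have h6 := congrArg (Subtype.val) h5
      simpa using h6
    have hwl : w ^ l = 1 := by
      rw [hw, mul_pow, hu₂l, one_mul, inv_pow, ← pow_mul, mul_comm i l, pow_mul, hu₁l,
        one_pow, inv_one]
    have hcop : Nat.Coprime l (r ^ (e - 1)) :=
      Nat.Coprime.pow_right _ ((Nat.coprime_primes hl hr).mpr (Ne.symm hrneql))
    have hw1 : w = 1 := by
      have hA := orderOf_dvd_of_pow_eq_one hwl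
      have hB := orderOf_dvd_of_pow_eq_one hwpow
      have hAB := Nat.dvd_gcd hA hB
      rw [Nat.Coprime] at hcop
      rw [hcop] at hAB
      exact orderOf_eq_one_iff.mp (Nat.dvd_one.mp hAB)
    have hu2i : u₂ = u₁ ^ i := by rwa [hw, mul_inv_eq_one] at hw1
    have hx2i : ((x₂ : ℤ) : ZMod d) = ((x₁ : ℤ) : ZMod d) ^ i := by
      have h7 := congrArg (Units.val) hu2i
      rw [hu₂v] at h7
      rw [h7, Units.val_pow_eq_pow_val, hu₁v]
    -- size analysis
    rcases le_or_gt i c with hic | hic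
    · have hdvdD : (d : ℤ) ∣ x₂ - x₁ ^ i := by
        rw [← ZMod.intCast_zmod_eq_zero_iff_dvd]
        push_cast
        rw [hx2i]; ring
      have hD0 : x₂ - x₁ ^ i ≠ 0 := by
        intro hE
        have h8 : x₁ ^ i = x₂ ^ 1 := by rw [pow_one]; linarith [sub_eq_zero.mp hE]
        exact absurd (hindep i 1 h8).2 one_ne_zero
      have hle := Int.le_of_dvd (abs_pos.mpr hD0) ((dvd_abs _ _).mpr hdvdD)
      refine hle.trans (abs_le.mpr ⟨?_, ?_⟩)
      · have h9 := hpowle i c hic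
        linarith
      · have h9 := hpowle k c (by omega)
        have h10 : (1 : ℤ) ≤ x₁ ^ i := one_le_pow₀ hx₁1
        linarith
    · rcases le_or_gt i (k + c) with hic2 | hic3
      · set j : ℕ := 2 * i - l with hj
        have h2i : i * 2 = l + j := by omega
        have hdvdD : (d : ℤ) ∣ x₂ ^ 2 - x₁ ^ j := by
          rw [← ZMod.intCast_zmod_eq_zero_iff_dvd]
          push_cast
          rw [hx2i, ← pow_mul, h2i, pow_add, hx1l, one_mul]
          ring
        have hD0 : x₂ ^ 2 - x₁ ^ j ≠ 0 := by
          intro hE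
          have h8 : x₁ ^ j = x₂ ^ 2 := (sub_eq_zero.mp hE).symm
          exact absurd (hindep j 2 h8).2 (by norm_num)
        have hle := Int.le_of_dvd (abs_pos.mpr hD0) ((dvd_abs _ _).mpr hdvdD)
        refine hle.trans (abs_le.mpr ⟨?_, ?_⟩)
        · have hxj : x₁ ^ j ≤ x₁ ^ c := hpowle j c (by omega)
          have h9 : (0 : ℤ) < x₂ ^ 2 := by positivity
          linarith
        · have hx22 : x₂ ^ 2 ≤ x₁ ^ (k * 2) := by
            rw [pow_mul]
            exact pow_le_pow_left₀ (by omega) hx₂k 2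
          have h9 : x₁ ^ (k * 2) ≤ x₁ ^ c := hpowle _ _ (by omega)
          have h10 : (1 : ℤ) ≤ x₁ ^ j := one_le_pow₀ hx₁1
          linarith
      · set j : ℕ := l - i with hj
        have hjc : k + j ≤ c := by omega
        have hij : i + j = l := by omega
        have hdvdD : (d : ℤ) ∣ x₂ * x₁ ^ j - 1 := by
          rw [← ZMod.intCast_zmod_eq_zero_iff_dvd]
          push_cast
          rw [hx2i, ← pow_add, hij, hx1l]
          ring
        have hpos : 0 < x₂ * x₁ ^ j - 1 := by
          have h2 : (1 : ℤ) ≤ x₁ ^ j := one_le_pow₀ hx₁1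
          nlinarith
        have hle := Int.le_of_dvd hpos hdvdD
        have hbound : x₂ * x₁ ^ j ≤ x₁ ^ c := by
          calc x₂ * x₁ ^ j ≤ x₁ ^ k * x₁ ^ j :=
                mul_le_mul_of_nonneg_right hx₂k (by positivity)
            _ = x₁ ^ (k + j) := (pow_add _ _ _).symm
            _ ≤ x₁ ^ c := hpowle _ _ hjc
        linarith

theorem gap_principle
    (l : ℕ) (hl : l.Prime) (hl19 : 19 ≤ l)
    (p q : ℕ) (hp : p.Prime) (hq : q.Prime) (hpq : p ≠ q)
    (x₁ x₂ : ℤ) (hx₁ : 1 < x₁) (hx₁₂ : x₁ < x₂)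
    (hindep : ∀ a b : ℕ, x₁ ^ a = x₂ ^ b → a = 0 ∧ b = 0)
    (m₁ m₂ : ℕ)
    (h₁ : (Polynomial.cyclotomic l ℤ).eval x₁ = p ^ m₁ * q)
    (h₂ : (Polynomial.cyclotomic l ℤ).eval x₂ = p ^ m₂ * q) :
    x₁ ^ ((l + 1) / 6) < x₂ := by
  haveI : Fact l.Prime := ⟨hl⟩
  by_contra hcon
  push_neg at hcon
  set k : ℕ := (l + 1) / 6 with hk
  -- l is odd
  have hlodd : l % 2 = 1 := Nat.odd_iff.mp (hl.odd_of_ne_two (by omega))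
  set c : ℕ := l / 2 with hc
  have hlc : l = 2 * c + 1 := by omega
  have hk1 : 1 ≤ k := by omega
  have h2k : 2 * k ≤ c := by omega
  have hc3 : 3 ≤ c := by omega
  have hx₂ : 1 < x₂ := lt_trans hx₁ hx₁₂
  have hx₁1 : (1 : ℤ) ≤ x₁ := by omega
  -- cyclotomic evals as geometric sums
  have hΦ : ∀ x : ℤ, (Polynomial.cyclotomic l ℤ).eval x = ∑ t ∈ Finset.range l, x ^ t := by
    intro x
    rw [Polynomial.cyclotomic_prime]
    simp [Polynomial.eval_finset_sum]
  set E₁ : ℤ := ∑ t ∈ Finset.range l, x₁ ^ t with hE₁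
  set E₂ : ℤ := ∑ t ∈ Finset.range l, x₂ ^ t with hE₂
  have h₁' : E₁ = (p : ℤ) ^ m₁ * q := by rw [hE₁, ← hΦ, h₁]
  have h₂' : E₂ = (p : ℤ) ^ m₂ * q := by rw [hE₂, ← hΦ, h₂]
  have hE₁dvd : E₁ ∣ x₁ ^ l - 1 := ⟨x₁ - 1, (geom_sum_mul x₁ l).symm⟩
  have hE₂dvd : E₂ ∣ x₂ ^ l - 1 := ⟨x₂ - 1, (geom_sum_mul x₂ l).symm⟩
  -- m₁ < m₂
  have hE₁E₂ : E₁ < E₂ := by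
    apply Finset.sum_lt_sum
    · intro t _
      exact pow_le_pow_left₀ (by omega) (le_of_lt hx₁₂) t
    · exact ⟨1, Finset.mem_range.mpr (by omega), by simpa using hx₁₂⟩
  have hm : m₁ < m₂ := by
    have h3 : (p : ℤ) ^ m₁ * q < (p : ℤ) ^ m₂ * q := by rw [← h₁', ← h₂']; exact hE₁E₂
    have hq0 : (0 : ℤ) < q := by exact_mod_cast hq.pos
    have h4 : (p : ℤ) ^ m₁ < (p : ℤ) ^ m₂ := lt_of_mul_lt_mul_right h3 (le_of_lt hq0)
    have h5 : p ^ m₁ < p ^ m₂ := by exact_mod_cast h4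
    exact (Nat.pow_lt_pow_iff_right hp.one_lt).mp h5
  -- l ≤ x₁ ^ c
  have hlx : (l : ℤ) ≤ x₁ ^ c := by
    have h6 : (2 : ℤ) ^ c ≤ x₁ ^ c := pow_le_pow_left₀ (by norm_num) (by omega) c
    have h7 : ((2 * c + 1 : ℕ) : ℤ) ≤ ((2 ^ c : ℕ) : ℤ) :=
      Int.ofNat_le.mpr (two_mul_add_one_le_two_pow c hc3)
    push_cast at h7
    rw [hlc]
    push_cast
    linarith
  -- apply key_bound with d = p ^ m₁
  have hb₁ : ((p ^ m₁ : ℕ) : ℤ) ≤ x₁ ^ c := by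
    apply key_bound l c k hl hlc hk1 h2k x₁ x₂ hx₁ hx₂ hcon hindep hlx
    · exact ⟨p, m₁, hp, rfl⟩
    · push_cast
      exact dvd_trans (Dvd.intro _ (h₁'.symm)) hE₁dvd
    · push_cast
      refine dvd_trans (dvd_trans (pow_dvd_pow (p : ℤ) (le_of_lt hm)) ?_) hE₂dvd
      exact Dvd.intro _ (h₂'.symm)
    · push_cast
      exact Dvd.intro _ (h₁'.symm)
  have hb₂ : ((q : ℕ) : ℤ) ≤ x₁ ^ c := by
    apply key_bound l c k hl hlc hk1 h2k x₁ x₂ hx₁ hx₂ hcon hindep hlx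
    · exact ⟨q, 1, hq, (pow_one q).symm⟩
    · exact dvd_trans (Dvd.intro_left _ (h₁'.symm)) hE₁dvd
    · exact dvd_trans (Dvd.intro_left _ (h₂'.symm)) hE₂dvd
    · exact Dvd.intro_left _ (h₁'.symm)
  -- contradiction with E₁ > x₁ ^ (2c)
  have hE₁gt : x₁ ^ (2 * c) < E₁ := by
    rw [hE₁, hlc, Finset.sum_range_succ]
    have h8 : 0 < ∑ t ∈ Finset.range (2 * c), x₁ ^ t :=
      Finset.sum_pos (fun t _ => pow_pos (by omega) t) (by simp; omega)
    linarith
  have hE₁le : E₁ ≤ x₁ ^ (2 * c) := by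
    rw [h₁']
    have h9 : (0 : ℤ) ≤ (p : ℤ) ^ m₁ := by positivity
    have h10 : (0 : ℤ) ≤ (q : ℤ) := by positivity
    calc (p : ℤ) ^ m₁ * q ≤ x₁ ^ c * x₁ ^ c := by
          apply mul_le_mul ?_ ?_ h10 (by positivity)
          · exact_mod_cast hb₁
          · exact_mod_cast hb₂
      _ = x₁ ^ (2 * c) := by rw [← pow_add, two_mul]
  linarith
end

section
/- Let β be a positive integer, let l be an odd prime dividing 2β + 1, and let q be an odd prime. Then σ(q^{2β}) has at least one prime factor r with r ≡ 1 (mod l). -/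
open Finset

theorem sigma_has_prime_factor_cong_one
    (β l q : ℕ) (hβ : 0 < β) (hl : l.Prime) (hlodd : Odd l)
    (hdvd : l ∣ 2 * β + 1) (hq : q.Prime) (hqodd : Odd q) :
    ∃ r : ℕ, r.Prime ∧ r ∣ (ArithmeticFunction.sigma 1) (q ^ (2 * β)) ∧
      r ≡ 1 [MOD l] := by
  have hq2 : 2 ≤ q := hq.two_le
  have hl2 : 2 ≤ l := hl.two_le
  have hlne2 : l ≠ 2 := by rintro rfl; exact (by decide : ¬ Odd 2) hlodd
  have hl3 : 3 ≤ l := by omega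
  set M := ∑ i ∈ range l, q ^ i with hMdef
  set S := ∑ i ∈ range (2 * β + 1), q ^ i with hSdef
  have hσ : (ArithmeticFunction.sigma 1) (q ^ (2 * β)) = S := by
    rw [ArithmeticFunction.sigma_one_apply_prime_pow hq]
  -- integer identities
  have hMint : (M : ℤ) * ((q : ℤ) - 1) = (q : ℤ) ^ l - 1 := by
    rw [hMdef]; push_cast; exact geom_sum_mul _ _
  have hSint : (S : ℤ) * ((q : ℤ) - 1) = (q : ℤ) ^ (2 * β + 1) - 1 := by
    rw [hSdef]; push_cast; exact geom_sum_mul _ _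
  obtain ⟨k, hk⟩ := hdvd
  have hdvd1 : (q : ℤ) ^ l - 1 ∣ (q : ℤ) ^ (2 * β + 1) - 1 := by
    have h := sub_dvd_pow_sub_pow ((q : ℤ) ^ l) 1 k
    simpa [← pow_mul, ← hk] using h
  have hMS : M ∣ S := by
    have hq1 : ((q : ℤ) - 1) ≠ 0 := by
      have : (1 : ℤ) < q := by exact_mod_cast hq.one_lt
      omega
    have h : (M : ℤ) * ((q : ℤ) - 1) ∣ (S : ℤ) * ((q : ℤ) - 1) := by
      rw [hMint, hSint]; exact hdvd1
    have := (mul_dvd_mul_iff_right hq1).mp h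
    exact_mod_cast this
  have hMdvd : (M : ℤ) ∣ (q : ℤ) ^ l - 1 := ⟨(q : ℤ) - 1, hMint.symm⟩
  -- l < M
  have hlM : l < M := by
    calc l = ∑ _i ∈ range l, 1 := by simp
    _ < M := by
      apply Finset.sum_lt_sum
      · intro i _; exact Nat.one_le_pow _ _ hq.pos
      · exact ⟨1, Finset.mem_range.mpr (by omega), by simpa using hq.one_lt⟩
  -- l^2 does not divide M
  have hMl2 : ¬ l ^ 2 ∣ M := by
    by_cases hql : l ∣ q - 1
    · intro hcon
      set n := l ^ 2 with hn
      have ha2 : ((q - 1 : ℕ) : ZMod n) ^ 2 = 0 := by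
        rw [← Nat.cast_pow, ZMod.natCast_eq_zero_iff]
        exact pow_dvd_pow_of_dvd hql 2
      have key : ∀ i : ℕ, (q : ZMod n) ^ i = 1 + (i : ZMod n) * ((q - 1 : ℕ) : ZMod n) := by
        intro i; induction i with
        | zero => simp
        | succ i ih =>
          have hq' : (q : ZMod n) = 1 + ((q - 1 : ℕ) : ZMod n) := by
            have : q = (q - 1) + 1 := by omega
            rw [this]; push_cast; ring
          rw [pow_succ, ih, hq']
          push_cast
          linear_combination (i : ZMod n) * ha2
      have hdvdsum : l ∣ ∑ i ∈ range l, i := by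
        have h2 : (∑ i ∈ range l, i) * 2 = l * (l - 1) := Finset.sum_range_id_mul_two l
        have hd : l ∣ (∑ i ∈ range l, i) * 2 := h2 ▸ Dvd.intro _ rfl
        rcases (Nat.Prime.dvd_mul hl).mp hd with h | h
        · exact h
        · exact absurd (Nat.le_of_dvd (by norm_num) h) (by omega)
      have hzero : (((∑ i ∈ range l, i) * (q - 1) : ℕ) : ZMod n) = 0 := by
        rw [ZMod.natCast_eq_zero_iff, hn, pow_two]
        exact mul_dvd_mul hdvdsum hql
      have hMcast : (M : ZMod n) = (l : ZMod n) := by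
        rw [hMdef]
        push_cast
        rw [Finset.sum_congr rfl (fun i _ => key i), Finset.sum_add_distrib,
          Finset.sum_const, ← Finset.sum_mul]
        have : (∑ i ∈ range l, (i : ZMod n)) = ((∑ i ∈ range l, i : ℕ) : ZMod n) := by
          push_cast; rfl
        rw [this]
        push_cast at hzero ⊢
        rw [hzero]
        simp [mul_comm]
      have hM0 : (M : ZMod n) = 0 := (ZMod.natCast_eq_zero_iff _ _).mpr hcon
      have : n ∣ l := (ZMod.natCast_eq_zero_iff _ _).mp (hMcast ▸ hM0)
      have hle := Nat.le_of_dvd (by omega) this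
      rw [hn] at hle
      nlinarith
    · intro hcon
      have hlMdvd : l ∣ M := dvd_trans (dvd_pow_self l two_ne_zero) hcon
      haveI := Fact.mk hl
      have hi : (l : ℤ) ∣ (q : ℤ) ^ l - 1 :=
        dvd_trans (Int.natCast_dvd_natCast.mpr hlMdvd) hMdvd
      have h0 : ((q : ZMod l)) ^ l - 1 = 0 := by
        have := (ZMod.intCast_zmod_eq_zero_iff_dvd _ l).mpr hi
        push_cast at this
        exact this
      rw [ZMod.pow_card, sub_eq_zero] at h0
      have : q ≡ 1 [MOD l] := by
        rwa [← Nat.cast_one, ZMod.natCast_eq_natCast_iff] at h0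
      exact hql ((Nat.modEq_iff_dvd' (by omega)).mp this.symm)
  -- extract a prime factor of M different from l
  obtain ⟨N, hN1, hNdvd, hNl⟩ : ∃ N, 1 < N ∧ N ∣ M ∧ ¬ l ∣ N := by
    by_cases hlm : l ∣ M
    · obtain ⟨m, hm⟩ := hlm
      refine ⟨m, ?_, ⟨l, by rw [hm]; ring⟩, ?_⟩
      · by_contra h
        have hm1 : m ≤ 1 := by omega
        have : M ≤ l := by
          calc M = l * m := hm
          _ ≤ l * 1 := Nat.mul_le_mul_left l hm1
          _ = l := by ring
        omega
      · intro hlm'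
        obtain ⟨t, ht⟩ := hlm'
        exact hMl2 ⟨t, by rw [hm, ht]; ring⟩
    · exact ⟨M, by omega, dvd_rfl, hlm⟩
  set r := N.minFac with hr
  have hrp : r.Prime := Nat.minFac_prime (by omega)
  have hrM : r ∣ M := (N.minFac_dvd).trans hNdvd
  have hrl : r ≠ l := by
    intro h
    exact hNl (h ▸ N.minFac_dvd)
  haveI := Fact.mk hrp
  have hrql : ((q : ZMod r)) ^ l = 1 := by
    have hi : (r : ℤ) ∣ (q : ℤ) ^ l - 1 :=
      dvd_trans (Int.natCast_dvd_natCast.mpr hrM) hMdvd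
    have := (ZMod.intCast_zmod_eq_zero_iff_dvd _ r).mpr hi
    push_cast at this
    rwa [sub_eq_zero] at this
  have hord : orderOf (q : ZMod r) ∣ l := orderOf_dvd_of_pow_eq_one hrql
  rcases (Nat.Prime.eq_one_or_self_of_dvd hl _ hord) with h1 | hll
  · -- order 1: q ≡ 1 mod r, so r ∣ l, contradiction
    exfalso
    have hq1 : (q : ZMod r) = 1 := orderOf_eq_one_iff.mp h1
    have hMl : (M : ZMod r) = (l : ZMod r) := by
      rw [hMdef]; push_cast; simp [hq1]
    have hM0 : (M : ZMod r) = 0 := (ZMod.natCast_eq_zero_iff _ _).mpr hrM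
    have : r ∣ l := (ZMod.natCast_eq_zero_iff _ _).mp (hMl ▸ hM0)
    exact hrl ((Nat.prime_dvd_prime_iff_eq hrp hl).mp this)
  · -- order l: l ∣ r - 1
    have hq0 : (q : ZMod r) ≠ 0 := by
      intro h
      rw [h] at hrql
      simp [zero_pow (by omega : l ≠ 0)] at hrql
    have hfermat := ZMod.pow_card_sub_one_eq_one hq0
    have : orderOf (q : ZMod r) ∣ r - 1 := orderOf_dvd_of_pow_eq_one hfermat
    rw [hll] at this
    refine ⟨r, hrp, ?_, ?_⟩
    · rw [hσ]; exact hrM.trans hMS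
    · exact ((Nat.modEq_iff_dvd' hrp.one_le).mpr this).symm
end

section
/- Let β be a positive integer such that 2β + 1 is composite, let l be a prime dividing 2β + 1, and let q be an odd prime. Then σ(q^{2β}) has at least two distinct prime factors r with r ≡ 1 (mod l). -/
/-!
Write `2β + 1 = l·m`; since `2β + 1` is odd and composite, `l` is odd and `m ≥ 3`. Then
`σ(q^{2β}) = ∑_{i<lm} q^i` is divisible by both `A = ∑_{i<l} q^i` and `B = ∑_{i<l} (q^m)^i`.
Modulo a prime `r ≠ l` dividing `∑_{i<l} x^i`, `x` has order exactly `l`, so `r ≡ 1 (mod l)`;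
and `l` itself divides such a sum at most once. Hence `A > l` has a prime factor `r₁ ≡ 1 (mod l)`,
which divides `q^l - 1`. If `B` had no prime factor besides `l` and `r₁`, lifting the exponent
(`v_{r₁}(q^{lm} - 1) = v_{r₁}(q^l - 1) + v_{r₁}(m)`) would give `B ≤ l·(q^l - 1)·m`, which is far
below `B ≥ q^{m(l-1)}`.
-/

open Finset

theorem geomSum_range_mul {R : Type*} [CommSemiring R] (x : R) (a b : ℕ) :
    ∑ i ∈ range (a * b), x ^ i = (∑ i ∈ range a, x ^ i) * ∑ j ∈ range b, (x ^ a) ^ j := by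
  induction b with
  | zero => simp
  | succ b ih =>
    rw [Nat.mul_succ, sum_range_add, ih, sum_range_succ, mul_add]
    simp_rw [pow_add, ← mul_sum, ← pow_mul, mul_comm]

theorem pow_eq_one_of_geomSum_eq_zero {R : Type*} [CommRing R] {x : R} {n : ℕ}
    (h : ∑ i ∈ range n, x ^ i = 0) : x ^ n = 1 := by
  rw [← sub_eq_zero, ← geom_sum_mul, h, zero_mul]

theorem Nat.modEq_one_of_prime_dvd_geomSum {r l x : ℕ} (hr : r.Prime) (hl : l.Prime)
    (hrx : r ∣ ∑ i ∈ range l, x ^ i) (hrl : r ≠ l) : r ≡ 1 [MOD l] := by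
  have := Fact.mk hr
  have hsum : ∑ i ∈ range l, (x : ZMod r) ^ i = 0 := by
    exact_mod_cast (ZMod.natCast_eq_zero_iff _ r).mpr hrx
  have hpow := pow_eq_one_of_geomSum_eq_zero hsum
  have hx0 : (x : ZMod r) ≠ 0 := by
    rintro hx
    rw [hx, zero_pow hl.ne_zero] at hpow
    exact zero_ne_one hpow
  rcases hl.eq_one_or_self_of_dvd _ (orderOf_dvd_of_pow_eq_one hpow) with hord | hord
  · rw [orderOf_eq_one_iff.mp hord] at hsum
    simp only [one_pow, sum_const, card_range, nsmul_eq_mul, mul_one,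
      ZMod.natCast_eq_zero_iff] at hsum
    exact absurd ((Nat.prime_dvd_prime_iff_eq hr hl).mp hsum) hrl
  · exact ((Nat.modEq_iff_dvd' hr.one_le).mpr (hord ▸ ZMod.orderOf_dvd_card_sub_one hx0)).symm

theorem Nat.modEq_one_of_dvd_geomSum {l x : ℕ} (hl : l.Prime) (h : l ∣ ∑ i ∈ range l, x ^ i) :
    x ≡ 1 [MOD l] := by
  have := Fact.mk hl
  have hsum : ∑ i ∈ range l, (x : ZMod l) ^ i = 0 := by
    exact_mod_cast (ZMod.natCast_eq_zero_iff _ l).mpr h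
  have hpow := pow_eq_one_of_geomSum_eq_zero hsum
  rw [ZMod.pow_card] at hpow
  exact (ZMod.natCast_eq_natCast_iff _ _ _).mp (by simpa using hpow)

theorem padicValNat_geomSum_le_one {l : ℕ} (hl : l.Prime) (hlodd : Odd l) (x : ℕ) :
    padicValNat l (∑ i ∈ range l, x ^ i) ≤ 1 := by
  have := Fact.mk hl
  by_cases hdvd : l ∣ ∑ i ∈ range l, x ^ i
  swap
  · simp [padicValNat.eq_zero_of_not_dvd hdvd]
  have hx := Nat.modEq_one_of_dvd_geomSum hl hdvd
  rcases lt_trichotomy x 1 with hx0 | rfl | hx1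
  · obtain rfl : x = 0 := by omega
    exact absurd (Nat.modEq_zero_iff_dvd.mp hx.symm) hl.not_dvd_one
  · simp [padicValNat_self]
  have hlx : l ∣ x - 1 := (Nat.modEq_iff_dvd' hx1.le).mp hx.symm
  have hlx' : ¬ l ∣ x := fun h =>
    hl.not_dvd_one (by simpa [Nat.sub_sub_self hx1.le] using Nat.dvd_sub h hlx)
  have hlte := padicValNat.pow_sub_pow hlodd hx1 (by simpa using hlx) hlx' hl.ne_zero
  rw [one_pow, ← geom_sum_mul_of_one_le hx1.le,
    padicValNat.mul (geom_sum_pos (by omega) hl.ne_zero).ne' (by omega), padicValNat_self] at hlte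
  omega

theorem Nat.eq_prod_ordProj_of_primeFactors_subset {n : ℕ} {s : Finset ℕ} (hn : n ≠ 0)
    (hs : n.primeFactors ⊆ s) : n = ∏ p ∈ s, ordProj[p] n := by
  conv_lhs => rw [Nat.prod_primeFactors_pow_factorization hn]
  refine prod_subset hs fun p _ hp => ?_
  rw [Finsupp.notMem_support_iff.mp (by rwa [Nat.support_factorization]), pow_zero]

theorem lt_geomSum {x n : ℕ} (hx : 2 ≤ x) (hn : 2 ≤ n) : n < ∑ i ∈ range n, x ^ i := by
  calc n = ∑ i ∈ range n, 1 := by simp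
    _ < ∑ i ∈ range n, x ^ i :=
      sum_lt_sum (fun i _ => Nat.one_le_pow _ _ (by omega))
        ⟨1, mem_range.mpr hn, by rw [pow_one]; omega⟩

theorem ordProj_dvd_of_padicValNat_le_one {n p : ℕ} (hp : p.Prime) (h : padicValNat p n ≤ 1) :
    ordProj[p] n ∣ p := by
  rw [Nat.factorization_def n hp]
  exact (pow_dvd_pow p h).trans (pow_one p).dvd

theorem exists_prime_ne_dvd_geomSum {l x : ℕ} (hl : l.Prime) (hlodd : Odd l) (hx : 2 ≤ x) :
    ∃ r, r.Prime ∧ r ∣ ∑ i ∈ range l, x ^ i ∧ r ≠ l := by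
  by_contra! h
  have hS : ∑ i ∈ range l, x ^ i ≠ 0 := (geom_sum_pos (by omega) hl.ne_zero).ne'
  have hsub : (∑ i ∈ range l, x ^ i).primeFactors ⊆ {l} := fun p hp =>
    mem_singleton.mpr (h p (Nat.prime_of_mem_primeFactors hp) (Nat.dvd_of_mem_primeFactors hp))
  have hdvd : ∑ i ∈ range l, x ^ i ∣ l := by
    rw [Nat.eq_prod_ordProj_of_primeFactors_subset hS hsub, prod_singleton]
    exact ordProj_dvd_of_padicValNat_le_one hl (padicValNat_geomSum_le_one hl hlodd x)
  exact absurd (Nat.le_of_dvd hl.pos hdvd) (lt_geomSum hx hl.two_le).not_ge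

theorem pow_padicValNat_pow_sub_one_dvd {r y m : ℕ} (hr : r.Prime) (hrodd : Odd r) (hy : 1 < y)
    (hry : r ∣ y - 1) (hm : m ≠ 0) : r ^ padicValNat r (y ^ m - 1) ∣ (y - 1) * m := by
  have := Fact.mk hr
  have hry' : ¬ r ∣ y := fun h =>
    hr.not_dvd_one (by simpa [Nat.sub_sub_self hy.le] using Nat.dvd_sub h hry)
  have hlte := padicValNat.pow_sub_pow hrodd hy (by simpa using hry) hry' hm
  rw [one_pow] at hlte
  rw [hlte, pow_add]
  exact mul_dvd_mul pow_padicValNat_dvd pow_padicValNat_dvd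

theorem mul_pow_sub_one_mul_lt_pow {x l m : ℕ} (hx : 3 ≤ x) (hl : 3 ≤ l) (hm : 3 ≤ m) :
    l * ((x ^ l - 1) * m) < x ^ (m * (l - 1)) := by
  have hbern (k : ℕ) : 1 + 2 * k ≤ x ^ k := by
    have h3 : (1 + 2 * k : ℤ) ≤ 3 ^ k := by
      have := one_add_mul_le_pow (show (-2 : ℤ) ≤ 2 by norm_num) k
      norm_num at this
      linarith
    exact (by exact_mod_cast h3 : 1 + 2 * k ≤ 3 ^ k).trans (Nat.pow_le_pow_left hx k)
  have hl' : l ≤ x ^ (l - 2) := (hbern (l - 2)).trans' (by omega)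
  have hm' : m ≤ x ^ (m - 1) := (hbern (m - 1)).trans' (by omega)
  have hexp : l - 2 + l + (m - 1) ≤ m * (l - 1) := by
    obtain ⟨a, rfl⟩ := Nat.exists_eq_add_of_le hl
    obtain ⟨b, rfl⟩ := Nat.exists_eq_add_of_le hm
    rw [show 3 + a - 2 = a + 1 by omega, show 3 + a - 1 = a + 2 by omega,
      show 3 + b - 1 = b + 2 by omega]
    nlinarith
  have hxl : 0 < x ^ l := by positivity
  calc l * ((x ^ l - 1) * m) < l * (x ^ l * m) := by gcongr; omega
    _ ≤ x ^ (l - 2) * (x ^ l * x ^ (m - 1)) := by gcongr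
    _ = x ^ (l - 2 + l + (m - 1)) := by rw [pow_add, pow_add, mul_assoc]
    _ ≤ x ^ (m * (l - 1)) := Nat.pow_le_pow_right (by omega) hexp

theorem exists_prime_dvd_geomSum_pow_ne {x l m r : ℕ} (hl : l.Prime) (hlodd : Odd l)
    (hx : 3 ≤ x) (hm : 3 ≤ m) (hr : r.Prime) (hrodd : Odd r) (hrl : r ≠ l)
    (hrx : r ∣ x ^ l - 1) :
    ∃ s, s.Prime ∧ s ∣ ∑ i ∈ range l, (x ^ m) ^ i ∧ s ≠ l ∧ s ≠ r := by
  by_contra! h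
  set N := ∑ i ∈ range l, (x ^ m) ^ i
  have hl3 : 3 ≤ l := by obtain ⟨k, rfl⟩ := hlodd; have := hl.two_le; omega
  have hN0 : N ≠ 0 := (geom_sum_pos (by omega) hl.ne_zero).ne'
  have hsub : N.primeFactors ⊆ {l, r} := fun p hp => by
    rw [mem_insert, mem_singleton, or_iff_not_imp_left]
    exact h p (Nat.prime_of_mem_primeFactors hp) (Nat.dvd_of_mem_primeFactors hp)
  have hxl : 1 < x ^ l := Nat.one_lt_pow hl.ne_zero (by omega)
  have hNdvd : N ∣ (x ^ l) ^ m - 1 := by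
    rw [← pow_mul, mul_comm, pow_mul]
    exact Dvd.intro _ (geom_sum_mul_of_one_le (Nat.one_le_pow _ _ (by omega)) l)
  have hr_part : ordProj[r] N ∣ (x ^ l - 1) * m := by
    have hpow : (x ^ l) ^ m - 1 ≠ 0 := Nat.sub_ne_zero_of_lt (Nat.one_lt_pow (by omega) hxl)
    refine (Nat.ordProj_dvd_ordProj_of_dvd hpow hNdvd r).trans ?_
    rw [Nat.factorization_def _ hr]
    exact pow_padicValNat_pow_sub_one_dvd hr hrodd hxl hrx (by omega)
  have hl_part : ordProj[l] N ∣ l :=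
    ordProj_dvd_of_padicValNat_le_one hl (padicValNat_geomSum_le_one hl hlodd _)
  have hupper : N ≤ l * ((x ^ l - 1) * m) := by
    refine Nat.le_of_dvd (Nat.mul_pos hl.pos (Nat.mul_pos (by omega) (by omega))) ?_
    rw [Nat.eq_prod_ordProj_of_primeFactors_subset hN0 hsub, prod_pair hrl.symm]
    exact mul_dvd_mul hl_part hr_part
  have hlower : x ^ (m * (l - 1)) ≤ N := by
    rw [pow_mul]
    exact single_le_sum (f := fun i => (x ^ m) ^ i) (fun _ _ => Nat.zero_le _)
      (mem_range.mpr (Nat.sub_lt hl.pos one_pos))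
  exact (mul_pow_sub_one_mul_lt_pow hx hl3 hm).not_ge (hlower.trans hupper)

theorem sigma_has_two_prime_factors_cong_one_general
    (β l q : ℕ)
    (hcomp : 1 < 2 * β + 1 ∧ ¬ (2 * β + 1).Prime)
    (hl : l.Prime) (hdvd : l ∣ 2 * β + 1)
    (hq : q.Prime) (hqodd : Odd q) :
    ∃ r₁ r₂ : ℕ, r₁.Prime ∧ r₂.Prime ∧ r₁ ≠ r₂ ∧
      r₁ ∣ (ArithmeticFunction.sigma 1) (q ^ (2 * β)) ∧
      r₂ ∣ (ArithmeticFunction.sigma 1) (q ^ (2 * β)) ∧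
      r₁ ≡ 1 [MOD l] ∧ r₂ ≡ 1 [MOD l] := by
  have hq3 : 3 ≤ q := by obtain ⟨k, rfl⟩ := hqodd; have := hq.two_le; omega
  have hlodd : Odd l := (odd_two_mul_add_one β).of_dvd_nat hdvd
  obtain ⟨m, hm⟩ := hdvd
  have hm3 : 3 ≤ m := by
    have hmodd : Odd m := (odd_two_mul_add_one β).of_dvd_nat (Dvd.intro_left l hm.symm)
    have hm1 : m ≠ 1 := by rintro rfl; exact hcomp.2 (by rwa [hm, mul_one])
    obtain ⟨k, rfl⟩ := hmodd; omega
  have hσ := ArithmeticFunction.sigma_one_apply_prime_pow (i := 2 * β) hq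
  have hσl : ArithmeticFunction.sigma 1 (q ^ (2 * β)) =
      (∑ i ∈ range l, q ^ i) * ∑ j ∈ range m, (q ^ l) ^ j := by
    rw [hσ, hm, geomSum_range_mul]
  have hσm : ArithmeticFunction.sigma 1 (q ^ (2 * β)) =
      (∑ i ∈ range m, q ^ i) * ∑ j ∈ range l, (q ^ m) ^ j := by
    rw [hσ, hm, mul_comm, geomSum_range_mul]
  obtain ⟨r₁, hr₁, hr₁dvd, hr₁l⟩ := exists_prime_ne_dvd_geomSum hl hlodd (by omega : 2 ≤ q)
  have hmod₁ := Nat.modEq_one_of_prime_dvd_geomSum hr₁ hl hr₁dvd hr₁l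
  have hr₁odd : Odd r₁ := hr₁.odd_of_ne_two fun h =>
    hl.not_dvd_one ((Nat.modEq_iff_dvd' (by omega)).mp (h ▸ hmod₁).symm)
  obtain ⟨r₂, hr₂, hr₂dvd, hr₂l, hr₂r₁⟩ := exists_prime_dvd_geomSum_pow_ne hl hlodd hq3 hm3 hr₁
    hr₁odd hr₁l (hr₁dvd.trans (Dvd.intro _ (geom_sum_mul_of_one_le (by omega) l)))
  exact ⟨r₁, r₂, hr₁, hr₂, hr₂r₁.symm, hσl ▸ dvd_mul_of_dvd_left hr₁dvd _,
    hσm ▸ dvd_mul_of_dvd_right hr₂dvd _, hmod₁,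
    Nat.modEq_one_of_prime_dvd_geomSum hr₂ hl hr₂dvd hr₂l⟩

theorem sigma_has_two_prime_factors_cong_one
    (β l q : ℕ) (hβ : 0 < β)
    (hcomp : 1 < 2 * β + 1 ∧ ¬ (2 * β + 1).Prime)
    (hl : l.Prime) (hdvd : l ∣ 2 * β + 1)
    (hq : q.Prime) (hqodd : Odd q) :
    ∃ r₁ r₂ : ℕ, r₁.Prime ∧ r₂.Prime ∧ r₁ ≠ r₂ ∧
      r₁ ∣ (ArithmeticFunction.sigma 1) (q ^ (2 * β)) ∧
      r₂ ∣ (ArithmeticFunction.sigma 1) (q ^ (2 * β)) ∧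
      r₁ ≡ 1 [MOD l] ∧ r₂ ≡ 1 [MOD l] :=
  sigma_has_two_prime_factors_cong_one_general β l q hcomp hl hdvd hq hqodd
end
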